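/- arXiv:2408.13436 — 4 statements merged into one kernel-verified Lean document; each statement's English description precedes it below -/
import Mathlib

section
/- Let G be a finite group, N ⊴ G a π-group for a set of primes π, θ ∈ Irr(N) G-invariant, and for each g ∈ G with g_π ∈ N let θ_g be the canonical extension of θ to N⟨g⟩ (the unique extension with the same determinantal order as θ); define θ̂(g) = θ_g(g) and θ̂(x) = 0 if x_π ∉ N. Then for every subgroup H with N ≤ H ≤ G and H/N a π'-group, the restriction θ̂_H equals the canonical extension of θ to H. -/
open scoped BigOperators
noncomputable section

open Classical in
/-- The `π`-part of a natural number: the product of prime powers in its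
factorization whose primes lie in `π`. -/
def Nat.piPart (π : Set ℕ) (n : ℕ) : ℕ :=
  n.factorization.prod fun p k => if p ∈ π then p ^ k else 1

/-- `n` is a `π`-number if every prime dividing `n` lies in `π`. -/
def IsPiNumber (π : Set ℕ) (n : ℕ) : Prop :=
  ∀ p : ℕ, p.Prime → p ∣ n → p ∈ π

/-- The `π`-part of an element of a finite group: the unique power of `g`
whose order is a `π`-number and whose complementary part has `π'`-order. -/
def elemPiPart (π : Set ℕ) {G : Type} [Group G] (g : G) : G :=
  g ^ ((orderOf g / Nat.piPart π (orderOf g)) ^ Nat.totient (Nat.piPart π (orderOf g)))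

/-- `χ` is the character of some finite-dimensional complex representation of `G`. -/
def IsChar (G : Type) [Group G] (χ : G → ℂ) : Prop :=
  ∃ V : FDRep ℂ G, ∀ g : G, χ g = V.character g

/-- The usual inner product of complex class functions. -/
def charInner (G : Type) [Group G] (φ ψ : G → ℂ) : ℂ :=
  (Nat.card G : ℂ)⁻¹ * ∑ᶠ g : G, φ g * starRingEnd ℂ (ψ g)

/-- An irreducible character: a character of norm one. -/
def IsIrrChar (G : Type) [Group G] (χ : G → ℂ) : Prop :=
  IsChar G χ ∧ charInner G χ χ = 1

/-- A class function. -/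
def IsClassFun (G : Type) [Group G] (φ : G → ℂ) : Prop :=
  ∀ g h : G, φ (h * g * h⁻¹) = φ g

/-- A virtual (generalized) character: a difference of two characters. -/
def IsGenChar (G : Type) [Group G] (ψ : G → ℂ) : Prop :=
  ∃ α β : G → ℂ, IsChar G α ∧ IsChar G β ∧ ψ = α - β

/-- `θ`, a character of the normal subgroup `N` of `G`, is `G`-invariant. -/
def IsGInvariant {G : Type} [Group G] (N : Subgroup G) [hN : N.Normal]
    (θ : ↥N → ℂ) : Prop :=
  ∀ (g : G) (n : ↥N), θ ⟨g * (n : G) * g⁻¹, hN.conj_mem (n : G) n.2 g⟩ = θ n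

/-- π-defect zero irreducible characters of a group `Q`. -/
def dzSet (π : Set ℕ) (Q : Type) [Group Q] : Set (Q → ℂ) :=
  {χ | IsIrrChar Q χ ∧ ∃ d : ℕ, χ 1 = (d : ℂ) ∧
    Nat.piPart π d = Nat.piPart π (Nat.card Q)}

/-- Irreducible characters of `G` lying over `θ ∈ Irr N` of relative π-defect zero. -/
def rdzSet (π : Set ℕ) (G : Type) [Group G] (N : Subgroup G) (θ : ↥N → ℂ) :
    Set (G → ℂ) :=
  {χ | IsIrrChar G χ ∧ charInner ↥N (fun n : ↥N => χ (n : G)) θ ≠ 0 ∧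
    ∃ m : ℕ, χ 1 = θ 1 * (m : ℂ) ∧ Nat.piPart π m = Nat.piPart π N.index}


/-- The determinantal order of a finite-dimensional complex representation:
the smallest positive `m` with `det(ρ h)^m = 1` for all `h`. -/
def detOrder {H : Type} [Group H] (V : FDRep ℂ H) : ℕ :=
  sInf {m | 0 < m ∧ ∀ h : H, (LinearMap.det (V.ρ h)) ^ m = 1}

/-- `φ` is the canonical extension of `θ` to `H`: a character of `H` extending `θ`
whose determinantal order equals that of `θ`. -/
def IsCanonicalExtension {G : Type} [Group G] {N H : Subgroup G} (hNH : N ≤ H)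
    (θ : ↥N → ℂ) (φ : ↥H → ℂ) : Prop :=
  (∀ n : ↥N, φ (Subgroup.inclusion hNH n) = θ n) ∧
  ∃ (V : FDRep ℂ ↥H) (W : FDRep ℂ ↥N), (∀ h, φ h = V.character h) ∧
    (∀ n, θ n = W.character n) ∧ detOrder V = detOrder W

/-!
Let `φ` be the canonical extension of `θ` to `H` and `h ∈ H`. Since `H/N` is a `π'`-group, every
`π`-part `h_π` lies in `N`; since `det φ` has the determinantal order of `θ`, which divides `|N|`,
it has `π`-order, so `det φ(h)` is recovered from `det φ(h)^e = det θ(h_π)` for a `π'`-number `e`.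
Hence `φ`, its restriction to `N⟨h⟩` and its restriction to `N` have the same determinantal order:
`φ` restricted to `N⟨h⟩` is the canonical extension `θ_h`, and `θ̂(h) = θ_h(h) = φ(h)`.
-/

namespace Nat

lemma piPart_mul_piPart_compl (π : Set ℕ) {n : ℕ} (hn : n ≠ 0) :
    piPart π n * piPart πᶜ n = n := by
  conv_rhs => rw [← prod_factorization_pow_eq_self hn]
  rw [piPart, piPart, ← Finsupp.prod_mul]
  refine Finsupp.prod_congr fun p _ => ?_
  by_cases hp : p ∈ π <;> simp [hp]

lemma piPart_pos (π : Set ℕ) (n : ℕ) : 0 < piPart π n := by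
  rw [piPart, Finsupp.prod]
  refine Finset.prod_pos fun p hp => ?_
  split_ifs
  · exact pow_pos (prime_of_mem_primeFactors (by simpa using hp)).pos _
  · exact one_pos

lemma div_piPart (π : Set ℕ) {n : ℕ} (hn : n ≠ 0) : n / piPart π n = piPart πᶜ n := by
  have hmul := piPart_mul_piPart_compl π hn
  rw [Nat.div_eq_iff_eq_mul_left (piPart_pos π n) ⟨_, hmul.symm⟩, mul_comm, hmul]

lemma isPiNumber_piPart (π : Set ℕ) (n : ℕ) : IsPiNumber π (piPart π n) := by
  intro p hp hdvd
  rw [piPart, Finsupp.prod] at hdvd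
  obtain ⟨q, hq, hpq⟩ := (Prime.dvd_finsetProd_iff hp.prime _).mp hdvd
  have hq' : q.Prime := prime_of_mem_primeFactors (by simpa using hq)
  split_ifs at hpq with hqπ
  · rwa [(prime_dvd_prime_iff_eq hp hq').mp (hp.dvd_of_dvd_pow hpq)]
  · exact absurd (dvd_one.mp hpq) hp.one_lt.ne'

end Nat

namespace IsPiNumber

variable {π : Set ℕ} {a b : ℕ}

lemma of_dvd (hb : IsPiNumber π b) (hab : a ∣ b) : IsPiNumber π a :=
  fun p hp hpa => hb p hp (hpa.trans hab)

lemma pow (ha : IsPiNumber π a) (k : ℕ) : IsPiNumber π (a ^ k) :=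
  fun p hp hpa => ha p hp (hp.dvd_of_dvd_pow hpa)

lemma coprime (ha : IsPiNumber π a) (hb : IsPiNumber πᶜ b) : a.Coprime b :=
  Nat.coprime_of_dvd fun p hp hpa hpb => hb p hp hpb (ha p hp hpa)

lemma eq_one (ha : IsPiNumber π a) (ha' : IsPiNumber πᶜ a) : a = 1 :=
  (Nat.coprime_self a).mp (ha.coprime ha')

end IsPiNumber

section ElemPiPart

variable {G : Type} [Group G] (π : Set ℕ) {g : G}

lemma elemPiPart_eq_pow (hg : IsOfFinOrder g) :
    elemPiPart π g =
      g ^ (Nat.piPart πᶜ (orderOf g) ^ Nat.totient (Nat.piPart π (orderOf g))) := by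
  rw [elemPiPart, Nat.div_piPart π hg.orderOf_pos.ne']

lemma exists_isPiNumber_compl_pow_eq_elemPiPart (hg : IsOfFinOrder g) :
    ∃ e, IsPiNumber πᶜ e ∧ g ^ e = elemPiPart π g :=
  ⟨_, (Nat.isPiNumber_piPart πᶜ _).pow _, (elemPiPart_eq_pow π hg).symm⟩

lemma isPiNumber_orderOf_elemPiPart (hg : IsOfFinOrder g) :
    IsPiNumber π (orderOf (elemPiPart π g)) := by
  set n := orderOf g
  have htot : Nat.totient (Nat.piPart π n) ≠ 0 := (Nat.totient_pos.mpr (Nat.piPart_pos π n)).ne'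
  refine (Nat.isPiNumber_piPart π n).of_dvd (orderOf_dvd_of_pow_eq_one ?_)
  rw [elemPiPart_eq_pow π hg, ← pow_mul, orderOf_dvd_iff_pow_eq_one.mp]
  calc n = Nat.piPart πᶜ n * Nat.piPart π n := by
        rw [mul_comm, Nat.piPart_mul_piPart_compl π hg.orderOf_pos.ne']
    _ ∣ _ := mul_dvd_mul_right (dvd_pow_self _ htot) _

lemma elemPiPart_mem_of_isPiNumber_compl_index {N : Subgroup G} [N.Normal]
    (hN : IsPiNumber πᶜ N.index) (hg : IsOfFinOrder g) : elemPiPart π g ∈ N := by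
  rw [← QuotientGroup.eq_one_iff, ← orderOf_eq_one_iff]
  exact IsPiNumber.eq_one
    ((isPiNumber_orderOf_elemPiPart π hg).of_dvd (orderOf_map_dvd (QuotientGroup.mk' N) _))
    (hN.of_dvd (orderOf_dvd_natCard _))

lemma Subgroup.coe_elemPiPart {H : Subgroup G} (h : H) :
    ((elemPiPart π h : H) : G) = elemPiPart π (h : G) := by
  simp only [elemPiPart, Subgroup.orderOf_coe, Subgroup.coe_pow]

end ElemPiPart

abbrev FDRep.res {k H K : Type} [Field k] [Group H] [Group K] (f : K →* H) (V : FDRep k H) :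
    FDRep k K :=
  FDRep.of (V.ρ.comp f)

section DetOrder

variable {H : Type} [Group H] (V : FDRep ℂ H)

lemma det_pow_natCard_eq_one (h : H) : LinearMap.det (V.ρ h) ^ Nat.card H = 1 := by
  rw [← map_pow, ← map_pow, pow_card_eq_one', map_one, map_one]

variable [Finite H]

lemma detOrder_dvd_iff {m : ℕ} : detOrder V ∣ m ↔ ∀ h, LinearMap.det (V.ρ h) ^ m = 1 := by
  set S := {m | 0 < m ∧ ∀ h : H, LinearMap.det (V.ρ h) ^ m = 1}
  obtain ⟨hpos, hpow⟩ : detOrder V ∈ S :=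
    Nat.sInf_mem ⟨_, Nat.card_pos, det_pow_natCard_eq_one V⟩
  refine ⟨fun ⟨c, hc⟩ h => by rw [hc, pow_mul, hpow h, one_pow], fun hm => ?_⟩
  by_contra hdvd
  have hmod : m % detOrder V ∈ S := ⟨Nat.pos_of_ne_zero (hdvd ∘ Nat.dvd_of_mod_eq_zero), fun h =>
    orderOf_dvd_iff_pow_eq_one.mp ((Nat.dvd_mod_iff (orderOf_dvd_of_pow_eq_one (hpow h))).mpr
      (orderOf_dvd_of_pow_eq_one (hm h)))⟩
  exact (Nat.mod_lt m hpos).not_ge (Nat.sInf_le hmod)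

lemma pow_detOrder (h : H) : LinearMap.det (V.ρ h) ^ detOrder V = 1 :=
  (detOrder_dvd_iff V).mp dvd_rfl h

lemma detOrder_dvd_card : detOrder V ∣ Nat.card H :=
  (detOrder_dvd_iff V).mpr (det_pow_natCard_eq_one V)

variable {K : Type} [Group K] [Finite K]

lemma detOrder_res_dvd (f : K →* H) : detOrder (V.res f) ∣ detOrder V :=
  (detOrder_dvd_iff _).mpr fun k => pow_detOrder V (f k)

lemma detOrder_res_eq_of_elemPiPart_mem {π : Set ℕ} (f : K →* H)
    (hV : IsPiNumber π (detOrder V)) (hf : ∀ h, elemPiPart π h ∈ f.range) :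
    detOrder (V.res f) = detOrder V := by
  refine dvd_antisymm (detOrder_res_dvd V f) ((detOrder_dvd_iff V).mpr fun h => ?_)
  obtain ⟨e, he, hpow⟩ := exists_isPiNumber_compl_pow_eq_elemPiPart π (isOfFinOrder_of_finite h)
  obtain ⟨k, hk⟩ := hf h
  have hdet : LinearMap.det (V.ρ h) ^ e = LinearMap.det ((V.res f).ρ k) := by
    rw [← map_pow, ← map_pow, hpow, ← hk]
    rfl
  have hord : IsPiNumber π (orderOf (LinearMap.det (V.ρ h))) :=
    hV.of_dvd (orderOf_dvd_of_pow_eq_one (pow_detOrder V h))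
  refine orderOf_dvd_iff_pow_eq_one.mp ((hord.coprime he).dvd_of_dvd_mul_left
    (orderOf_dvd_of_pow_eq_one ?_))
  rw [pow_mul, hdet, pow_detOrder]

end DetOrder

lemma IsCanonicalExtension.res {G : Type} [Group G] [Finite G] {π : Set ℕ} {N K H : Subgroup G}
    (hNK : N ≤ K) (hKH : K ≤ H) (hN : IsPiNumber π (Nat.card N))
    (helem : ∀ h : H, elemPiPart π h ∈ N.subgroupOf H) {θ : N → ℂ} {φ : H → ℂ}
    (hφ : IsCanonicalExtension (hNK.trans hKH) θ φ) :
    IsCanonicalExtension hNK θ (φ ∘ Subgroup.inclusion hKH) := by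
  obtain ⟨hext, V, W, hφV, -, hdet⟩ := hφ
  have hV : IsPiNumber π (detOrder V) := hdet ▸ hN.of_dvd (detOrder_dvd_card W)
  have hVN : detOrder (V.res (Subgroup.inclusion (hNK.trans hKH))) = detOrder V :=
    detOrder_res_eq_of_elemPiPart_mem V _ hV (by simpa using helem)
  refine ⟨hext, V.res (Subgroup.inclusion hKH), V.res (Subgroup.inclusion (hNK.trans hKH)),
    fun k => hφV _, fun n => (hext n).symm.trans (hφV _), ?_⟩
  refine dvd_antisymm (hVN ▸ detOrder_res_dvd V _) ?_
  exact detOrder_res_dvd (V.res (Subgroup.inclusion hKH)) (Subgroup.inclusion hNK)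

theorem theta_hat_restricts_to_canonical_extension_general
    {G : Type} [Group G] [Finite G] (π : Set ℕ) (N : Subgroup G) [N.Normal]
    (hNpi : IsPiNumber π (Nat.card ↥N))
    (θ : ↥N → ℂ)
    (θhat : G → ℂ)
    (hdef : ∀ (g : G), elemPiPart π g ∈ N →
      ∀ φ : ↥(N ⊔ Subgroup.zpowers g) → ℂ,
        IsCanonicalExtension le_sup_left θ φ →
        θhat g = φ ⟨g, Subgroup.mem_sup_right (Subgroup.mem_zpowers g)⟩)
    (H : Subgroup G) (hNH : N ≤ H) (hH : IsPiNumber πᶜ (N.relIndex H))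
    (φ : ↥H → ℂ) (hφ : IsCanonicalExtension hNH θ φ) :
    ∀ h : ↥H, θhat (h : G) = φ h := by
  have helem (h : H) : elemPiPart π h ∈ N.subgroupOf H :=
    elemPiPart_mem_of_isPiNumber_compl_index π hH (isOfFinOrder_of_finite h)
  intro h
  have hKH : N ⊔ Subgroup.zpowers (h : G) ≤ H := sup_le hNH (Subgroup.zpowers_le.mpr h.2)
  have hh : elemPiPart π (h : G) ∈ N := Subgroup.coe_elemPiPart π h ▸ helem h
  exact hdef h hh _ (hφ.res le_sup_left hKH hNpi helem)

theorem theta_hat_restricts_to_canonical_extension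
    {G : Type} [Group G] [Finite G] (π : Set ℕ) (N : Subgroup G) [N.Normal]
    (hNpi : IsPiNumber π (Nat.card ↥N))
    (θ : ↥N → ℂ) (hθ : IsIrrChar ↥N θ) (hinv : IsGInvariant N θ)
    (θhat : G → ℂ)
    (hdef : ∀ (g : G), elemPiPart π g ∈ N →
      ∀ φ : ↥(N ⊔ Subgroup.zpowers g) → ℂ,
        IsCanonicalExtension le_sup_left θ φ →
        θhat g = φ ⟨g, Subgroup.mem_sup_right (Subgroup.mem_zpowers g)⟩)
    (hzero : ∀ g : G, elemPiPart π g ∉ N → θhat g = 0)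
    (H : Subgroup G) (hNH : N ≤ H) (hH : IsPiNumber πᶜ (N.relIndex H))
    (φ : ↥H → ℂ) (hφ : IsCanonicalExtension hNH θ φ) :
    ∀ h : ↥H, θhat (h : G) = φ h :=
  theta_hat_restricts_to_canonical_extension_general π N hNpi θ θhat hdef H hNH hH φ hφ
end
end

section
/- Let G be a finite group, N ⊴ G, H a subgroup with N ≤ H ≤ G, and θ ∈ Irr(N) a G-invariant character. If θ extends to H, then the order of the cohomology class [θ]_{G/N} ∈ H²(G/N, ℂ^×) associated to the character triple (G,N,θ) divides the index |G : H|. -/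
open scoped BigOperators
noncomputable section

def IsTwoCocycle {Q : Type} [Group Q] (a : Q → Q → ℂˣ) : Prop :=
  ∀ x y z : Q, a x y * a (x * y) z = a y z * a x (y * z)

def IsTwoCoboundary {Q : Type} [Group Q] (a : Q → Q → ℂˣ) : Prop :=
  ∃ ν : Q → ℂˣ, ∀ x y : Q, a x y = ν x * ν y * (ν (x * y))⁻¹

/-- The order of the cohomology class of a 2-cocycle `a` in `H²(Q, ℂˣ)`:
the least positive `m` such that `a^m` is a coboundary. -/
def cocycleClassOrder {Q : Type} [Group Q] (a : Q → Q → ℂˣ) : ℕ :=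
  sInf {m | 0 < m ∧ IsTwoCoboundary fun x y => a x y ^ m}

/-- The data of a projective representation of `G` associated with the character
triple `(G, N, θ)`, with factor set inflated from a 2-cocycle on `G ⧸ N`
(Isaacs, Theorem 11.2): its cohomology class is `[θ]_{G/N}`. -/
structure ProjRepOfTriple (G : Type) [Group G] (N : Subgroup G) [N.Normal]
    (θ : ↥N → ℂ) where
  d : ℕ
  X : G → Matrix (Fin d) (Fin d) ℂ
  a : G ⧸ N → G ⧸ N → ℂˣ
  cocycle : IsTwoCocycle a
  factor : ∀ g h : G, X g * X h = (a (g : G ⧸ N) (h : G ⧸ N) : ℂ) • X (g * h)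
  map_one : X 1 = 1
  unit : ∀ g : G, IsUnit (X g)
  traceN : ∀ n : ↥N, Matrix.trace (X (n : G)) = θ n
  mulN_left : ∀ (n : ↥N) (g : G), X ((n : G) * g) = X (n : G) * X g
  mulN_right : ∀ (n : ↥N) (g : G), X (g * (n : G)) = X g * X (n : G)

set_option maxHeartbeats 1600000
namespace OCCAux

structure Ext {Q : Type} [Group Q] (a : Q → Q → ℂˣ) : Type where
  u : ℂˣ
  q : Q

section TransferPart

variable {Q : Type} [Group Q] {a : Q → Q → ℂˣ}

lemma cocycle_one_left (ha : IsTwoCocycle a) (y : Q) : a 1 y = a 1 1 := by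
  have h := ha 1 1 y
  simp only [one_mul] at h
  exact (mul_right_cancel h).symm

lemma cocycle_one_right (ha : IsTwoCocycle a) (y : Q) : a y 1 = a 1 1 := by
  have h := ha y 1 1
  simp only [mul_one, one_mul] at h
  exact mul_right_cancel h

theorem coboundary_pow_of_res (ha : IsTwoCocycle a)
    (K : Subgroup Q) (hK : K.index ≠ 0) (ν : Q → ℂˣ)
    (hres : ∀ x ∈ K, ∀ y ∈ K, a x y = ν x * ν y * (ν (x * y))⁻¹) :
    IsTwoCoboundary fun x y => a x y ^ K.index := by
  letI : Mul (Ext a) := ⟨fun e f => ⟨e.u * f.u * a e.q f.q, e.q * f.q⟩⟩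
  letI : One (Ext a) := ⟨⟨(a 1 1)⁻¹, 1⟩⟩
  letI : Inv (Ext a) := ⟨fun e => ⟨e.u⁻¹ * (a e.q⁻¹ e.q)⁻¹ * (a 1 1)⁻¹, e.q⁻¹⟩⟩
  have mul_def : ∀ e f : Ext a, e * f = ⟨e.u * f.u * a e.q f.q, e.q * f.q⟩ := fun _ _ => rfl
  have one_def : (1 : Ext a) = ⟨(a 1 1)⁻¹, 1⟩ := rfl
  have inv_def : ∀ e : Ext a, e⁻¹ = ⟨e.u⁻¹ * (a e.q⁻¹ e.q)⁻¹ * (a 1 1)⁻¹, e.q⁻¹⟩ := fun _ => rfl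
  letI : Group (Ext a) := Group.ofLeftAxioms
    (by
      intro e f g
      rw [mul_def, mul_def, mul_def, mul_def]
      simp only
      congr 1
      · have h := ha e.q f.q g.q
        have h2 : (e.u * f.u * a e.q f.q) * g.u * a (e.q * f.q) g.q
            = (e.u * (f.u * g.u)) * (a e.q f.q * a (e.q * f.q) g.q) := by
          simp only [mul_comm, mul_assoc, mul_left_comm]
        rw [h2, h]
        simp only [mul_comm, mul_assoc, mul_left_comm]
      · exact mul_assoc _ _ _)
    (by
      intro e
      rw [one_def, mul_def]
      simp only
      have : (1 : Ext a).q = 1 := rfl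
      cases e with
      | mk u q =>
        simp only
        congr 1
        · rw [cocycle_one_left ha q]
          simp [mul_comm, mul_assoc]
        · exact one_mul q)
    (by
      intro e
      rw [inv_def, mul_def, one_def]
      cases e with
      | mk u q =>
        simp only
        congr 1
        · simp [mul_comm, mul_assoc, mul_left_comm]
        · exact inv_mul_cancel q)
  -- the projection homomorphism
  let π : Ext a →* Q := MonoidHom.mk' (fun e => e.q) (fun _ _ => rfl)
  have hπsurj : Function.Surjective π := fun q => ⟨⟨1, q⟩, rfl⟩
  let EK : Subgroup (Ext a) := K.comap π
  have hEKindex : EK.index = K.index := K.index_comap_of_surjective hπsurj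
  haveI : EK.FiniteIndex := ⟨by rw [hEKindex]; exact hK⟩
  have hν1 : ν 1 = a 1 1 := by
    have h := hres 1 K.one_mem 1 K.one_mem
    rw [one_mul] at h
    rw [h, mul_inv_cancel_right]
  -- the homomorphism on the preimage of K
  have fmul : ∀ x y : ↥EK, ((x * y : ↥EK) : Ext a).u * ν ((x * y : ↥EK) : Ext a).q
      = ((x : Ext a).u * ν (x : Ext a).q) * ((y : Ext a).u * ν (y : Ext a).q) := by
    intro x y
    have hx : (x : Ext a).q ∈ K := x.2
    have hy : (y : Ext a).q ∈ K := y.2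
    have hco : ((x * y : ↥EK) : Ext a) = (x : Ext a) * (y : Ext a) := rfl
    rw [hco, mul_def]
    simp only
    rw [hres _ hx _ hy]
    have hc : (ν ((x : Ext a).q * (y : Ext a).q))⁻¹ * ν ((x : Ext a).q * (y : Ext a).q) = 1 :=
      inv_mul_cancel _
    calc (x : Ext a).u * (y : Ext a).u *
          (ν (x : Ext a).q * ν (y : Ext a).q * (ν ((x : Ext a).q * (y : Ext a).q))⁻¹) *
          ν ((x : Ext a).q * (y : Ext a).q)
        = ((x : Ext a).u * ν (x : Ext a).q) * ((y : Ext a).u * ν (y : Ext a).q) *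
          ((ν ((x : Ext a).q * (y : Ext a).q))⁻¹ * ν ((x : Ext a).q * (y : Ext a).q)) := by
          simp only [mul_comm, mul_assoc, mul_left_comm]
      _ = _ := by rw [hc, mul_one]
  let f : ↥EK →* ℂˣ :=
    { toFun := fun e => (e : Ext a).u * ν (e : Ext a).q
      map_one' := by
        show (a 1 1)⁻¹ * ν 1 = 1
        rw [hν1]
        exact inv_mul_cancel _
      map_mul' := fmul }
  -- the central embedding of ℂˣ
  let z : ℂˣ →* Ext a := MonoidHom.mk' (fun c => ⟨c * (a 1 1)⁻¹, 1⟩)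
    (by
      intro c c'
      rw [mul_def]
      simp only
      congr 1
      · simp only [mul_comm, mul_assoc, mul_left_comm, inv_mul_cancel_left,
          mul_inv_cancel_left]
      · exact (one_mul _).symm)
  have hzcomm : ∀ (c : ℂˣ) (e : Ext a), z c * e = e * z c := by
    intro c e
    rw [mul_def, mul_def]
    have hz1 : (z c).q = 1 := rfl
    have hz2 : (z c).u = c * (a 1 1)⁻¹ := rfl
    simp only [hz1, hz2]
    congr 1
    · rw [cocycle_one_left ha e.q, cocycle_one_right ha e.q]
      simp only [mul_comm, mul_assoc, mul_left_comm]
    · rw [one_mul, mul_one]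
  have hzmem : ∀ c : ℂˣ, z c ∈ EK := fun c => K.one_mem
  -- value of the transfer map on central elements
  have hVerz : ∀ c : ℂˣ, f.transfer (z c) = c ^ K.index := by
    intro c
    have key : ∀ (k : ℕ) (g₀ : Ext a), g₀⁻¹ * (z c) ^ k * g₀ ∈ EK →
        g₀⁻¹ * (z c) ^ k * g₀ = (z c) ^ k := by
      intro k g₀ _
      have hcom : Commute (z c) g₀ := hzcomm c g₀
      have h2 := (hcom.pow_left k).eq
      rw [mul_assoc, h2, ← mul_assoc, inv_mul_cancel, one_mul]
    rw [MonoidHom.transfer_eq_pow f (z c) key]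
    have hzp : (z c) ^ EK.index = z (c ^ EK.index) := (map_pow z c EK.index).symm
    have : f ⟨(z c) ^ EK.index, MonoidHom.transfer_eq_pow_aux (z c) key⟩
        = ((z c) ^ EK.index).u * ν ((z c) ^ EK.index).q := rfl
    rw [this, hzp]
    have h1 : (z (c ^ EK.index)).u = c ^ EK.index * (a 1 1)⁻¹ := rfl
    have h2 : (z (c ^ EK.index)).q = 1 := rfl
    rw [h1, h2, hν1, hEKindex]
    rw [mul_assoc, inv_mul_cancel, mul_one]
  -- the section
  have hs : ∀ x y : Q, (⟨1, x⟩ : Ext a) * ⟨1, y⟩ = z (a x y) * ⟨1, x * y⟩ := by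
    intro x y
    rw [mul_def, mul_def]
    have h2 : (z (a x y)).q = 1 := rfl
    have h1 : (z (a x y)).u = a x y * (a 1 1)⁻¹ := rfl
    simp only [h1, h2]
    congr 1
    · rw [cocycle_one_left ha (x * y)]
      simp only [one_mul, mul_assoc, inv_mul_cancel, mul_one]
    · rw [one_mul]
  refine ⟨fun x => f.transfer ⟨1, x⟩, fun x y => ?_⟩
  have h3 : f.transfer ⟨1, x⟩ * f.transfer ⟨1, y⟩
      = a x y ^ K.index * f.transfer ⟨1, x * y⟩ := by
    rw [← map_mul, hs, map_mul, hVerz]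
  rw [eq_mul_inv_iff_mul_eq, ← h3]

end TransferPart

section OrderPart

variable {Q : Type} [Group Q]

lemma order_dvd (a : Q → Q → ℂˣ) {n : ℕ} (hn : 0 < n)
    (hc : IsTwoCoboundary fun x y => a x y ^ n) : cocycleClassOrder a ∣ n := by
  set S : Set ℕ := {m | 0 < m ∧ IsTwoCoboundary fun x y => a x y ^ m} with hS
  have hnS : n ∈ S := ⟨hn, hc⟩
  have hd : sInf S ∈ S := Nat.sInf_mem ⟨n, hnS⟩
  set dd := sInf S with hdd
  obtain ⟨ν₁, h1⟩ := hc
  obtain ⟨ν₂, h2⟩ := hd.2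
  have hr : IsTwoCoboundary fun x y => a x y ^ (n % dd) := by
    refine ⟨fun x => ν₁ x * (ν₂ x ^ (n / dd))⁻¹, fun x y => ?_⟩
    have key : a x y ^ (n % dd) = a x y ^ n * ((a x y ^ dd) ^ (n / dd))⁻¹ := by
      rw [← pow_mul, eq_mul_inv_iff_mul_eq, ← pow_add]
      congr 1
      exact Nat.mod_add_div n dd
    show a x y ^ (n % dd) = _
    simp only
    rw [key, show a x y ^ n = ν₁ x * ν₁ y * (ν₁ (x * y))⁻¹ from h1 x y,
      show a x y ^ dd = ν₂ x * ν₂ y * (ν₂ (x * y))⁻¹ from h2 x y]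
    simp only [mul_pow, mul_inv, inv_pow, inv_inv]
    simp only [mul_comm, mul_assoc, mul_left_comm]
  have hfin : dd ∣ n := by
    by_cases h0 : n % dd = 0
    · exact Nat.dvd_of_mod_eq_zero h0
    · exfalso
      have hmem : n % dd ∈ S := ⟨Nat.pos_of_ne_zero h0, hr⟩
      have hle := Nat.sInf_le hmem
      have hlt := Nat.mod_lt n hd.1
      omega
  exact hfin

end OrderPart

open Matrix LinearMap Module
open scoped ComplexOrder

section RepPart

variable {M : Type} [Group M] [Fintype M]

lemma psd_add {d : ℕ} {A B : Matrix (Fin d) (Fin d) ℂ}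
    (hA : A.PosSemidef) (hB : B.PosSemidef) : (A + B).PosSemidef :=
  ⟨hA.1.add hB.1, fun x => by
    exact (hA.add hB).2 x⟩

lemma psd_sum {d : ℕ} (s : Finset M) (f : M → Matrix (Fin d) (Fin d) ℂ)
    (h : ∀ x ∈ s, (f x).PosSemidef) : (∑ x ∈ s, f x).PosSemidef :=
  Finset.sum_induction f (fun A => A.PosSemidef) (fun _ _ hA hB => psd_add hA hB)
    Matrix.PosSemidef.zero h

lemma trace_rep_inv {d : ℕ} (R : M → Matrix (Fin d) (Fin d) ℂ)
    (hmul : ∀ x y, R (x * y) = R x * R y) (h1 : R 1 = 1) (m : M) :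
    Matrix.trace (R m⁻¹) = starRingEnd ℂ (Matrix.trace (R m)) := by
  classical
  set B : Matrix (Fin d) (Fin d) ℂ := ∑ x : M, (R x)ᴴ * R x with hB
  have hpos : B.PosDef := by
    have h1' : (R 1)ᴴ * R 1 = 1 := by rw [h1]; simp
    rw [hB, ← Finset.add_sum_erase _ _ (Finset.mem_univ (1 : M)), h1']
    exact Matrix.PosDef.add_posSemidef Matrix.PosDef.one
      (psd_sum _ _ fun x _ => Matrix.posSemidef_conjTranspose_mul_self (R x))
  have hdet : IsUnit B.det := (Matrix.isUnit_iff_isUnit_det B).mp hpos.isUnit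
  have hRu : R m * R m⁻¹ = 1 := by rw [← hmul, mul_inv_cancel, h1]
  have hinvar : (R m)ᴴ * B * R m = B := by
    rw [hB, Finset.mul_sum, Finset.sum_mul]
    rw [← Equiv.sum_comp (Equiv.mulRight m) fun x => (R x)ᴴ * R x]
    refine Finset.sum_congr rfl fun x _ => ?_
    have hx' : (Equiv.mulRight m) x = x * m := rfl
    calc (R m)ᴴ * ((R x)ᴴ * R x) * R m
        = (R x * R m)ᴴ * (R x * R m) := by
          simp only [Matrix.conjTranspose_mul, Matrix.mul_assoc]
      _ = (R ((Equiv.mulRight m) x))ᴴ * R ((Equiv.mulRight m) x) := by rw [hx', hmul]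
  have hkey : R m⁻¹ = B⁻¹ * ((R m)ᴴ * B) := by
    have h2 : (R m)ᴴ * B = B * R m⁻¹ := by
      calc (R m)ᴴ * B = ((R m)ᴴ * B * R m) * R m⁻¹ := by
            rw [Matrix.mul_assoc ((R m)ᴴ * B), hRu, Matrix.mul_one]
        _ = B * R m⁻¹ := by rw [hinvar]
    rw [h2, ← Matrix.mul_assoc, Matrix.nonsing_inv_mul B hdet, Matrix.one_mul]
  rw [hkey, Matrix.trace_mul_comm, Matrix.mul_assoc, Matrix.mul_nonsing_inv B hdet,
    Matrix.mul_one, Matrix.trace_conjTranspose]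
  rfl

def matRep {d : ℕ} (R : M → Matrix (Fin d) (Fin d) ℂ)
    (hmul : ∀ x y, R (x * y) = R x * R y) (h1 : R 1 = 1) :
    Representation ℂ M (Fin d → ℂ) where
  toFun m := Matrix.toLin' (R m)
  map_one' := by show Matrix.toLin' (R 1) = _; rw [h1, Matrix.toLin'_one]; rfl
  map_mul' x y := by
    show Matrix.toLin' (R (x * y)) = Matrix.toLin' (R x) * Matrix.toLin' (R y)
    rw [hmul, Matrix.toLin'_mul]; rfl

lemma trace_toLin' {k : ℕ} (A : Matrix (Fin k) (Fin k) ℂ) :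
    LinearMap.trace ℂ (Fin k → ℂ) (Matrix.toLin' A) = A.trace := by
  rw [LinearMap.trace_eq_matrix_trace ℂ (Pi.basisFun ℂ (Fin k)),
    LinearMap.toMatrix_eq_toMatrix', LinearMap.toMatrix'_toLin']

lemma sum_trace_eq {d e : ℕ}
    (R : M → Matrix (Fin d) (Fin d) ℂ) (S : M → Matrix (Fin e) (Fin e) ℂ)
    (hRmul : ∀ x y, R (x * y) = R x * R y) (hR1 : R 1 = 1)
    (hSmul : ∀ x y, S (x * y) = S x * S y) (hS1 : S 1 = 1) :
    ∑ m : M, (R m).trace * (S m⁻¹).trace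
      = (Fintype.card M : ℂ) *
        (finrank ℂ (Representation.linHom (matRep S hSmul hS1)
          (matRep R hRmul hR1)).invariants : ℂ) := by
  letI : Invertible (Fintype.card M : ℂ) :=
    invertibleOfNonzero (by exact_mod_cast Fintype.card_ne_zero)
  have h := FDRep.average_char_eq_finrank_invariants
    (FDRep.of (Representation.linHom (matRep S hSmul hS1) (matRep R hRmul hR1)))
  have hchar : ∀ m : M,
      (FDRep.of (Representation.linHom (matRep S hSmul hS1) (matRep R hRmul hR1))).character m
      = (S m⁻¹).trace * (R m).trace := by
    intro m
    have h0 : (FDRep.of (Representation.linHom (matRep S hSmul hS1)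
          (matRep R hRmul hR1))).character m
        = (FDRep.of (matRep S hSmul hS1)).character m⁻¹
          * (FDRep.of (matRep R hRmul hR1)).character m :=
      FDRep.char_linHom (FDRep.of (matRep S hSmul hS1)) (FDRep.of (matRep R hRmul hR1)) m
    rw [h0]
    have h1 : (FDRep.of (matRep S hSmul hS1)).character m⁻¹ = (S m⁻¹).trace := by
      show LinearMap.trace ℂ _ (Matrix.toLin' (S m⁻¹)) = _
      exact trace_toLin' _
    have h2 : (FDRep.of (matRep R hRmul hR1)).character m = (R m).trace := by
      show LinearMap.trace ℂ _ (Matrix.toLin' (R m)) = _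
      exact trace_toLin' _
    rw [h1, h2]
  have hrho : (FDRep.of (Representation.linHom (matRep S hSmul hS1) (matRep R hRmul hR1))).ρ
      = Representation.linHom (matRep S hSmul hS1) (matRep R hRmul hR1) := rfl
  rw [hrho] at h
  calc ∑ m : M, (R m).trace * (S m⁻¹).trace
      = ∑ m : M, (FDRep.of (Representation.linHom (matRep S hSmul hS1)
          (matRep R hRmul hR1))).character m := by
        refine Finset.sum_congr rfl fun m _ => ?_
        rw [hchar m, mul_comm]
    _ = (Fintype.card M : ℂ) * (⅟(Fintype.card M : ℂ) • ∑ m : M,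
          (FDRep.of (Representation.linHom (matRep S hSmul hS1)
          (matRep R hRmul hR1))).character m) := by
        rw [smul_eq_mul, ← mul_assoc, mul_invOf_self, one_mul]
    _ = _ := by rw [invOf_eq_inv, smul_eq_mul, ← Nat.card_eq_fintype_card, h]

lemma trace_zero_of_dim_zero (A : Matrix (Fin 0) (Fin 0) ℂ) : A.trace = 0 := by
  simp [Matrix.trace]

lemma comm_scalar {d : ℕ} (R : M → Matrix (Fin d) (Fin d) ℂ)
    (hmul : ∀ x y, R (x * y) = R x * R y) (h1 : R 1 = 1)
    (hsum : (Fintype.card M : ℂ)⁻¹ * ∑ m : M, (R m).trace * (R m⁻¹).trace = 1) :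
    ∀ C : Matrix (Fin d) (Fin d) ℂ, (∀ m, R m * C = C * R m) → ∃ c : ℂ, C = c • 1 := by
  have hcard : (Fintype.card M : ℂ) ≠ 0 := by exact_mod_cast Fintype.card_ne_zero
  set ρ := matRep R hmul h1 with hρ
  set p := (Representation.linHom ρ ρ).invariants with hp
  have hfin : finrank ℂ p = 1 := by
    have h := sum_trace_eq R R hmul h1 hmul h1
    rw [h, ← mul_assoc, inv_mul_cancel₀ hcard, one_mul] at hsum
    exact_mod_cast hsum
  have hd : 0 < d := by
    rcases Nat.eq_zero_or_pos d with h0 | h0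
    · exfalso
      subst h0
      rw [show ∑ m : M, (R m).trace * (R m⁻¹).trace = 0 from
        Finset.sum_eq_zero fun m _ => by rw [trace_zero_of_dim_zero, zero_mul],
        mul_zero] at hsum
      exact zero_ne_one hsum
    · exact h0
  have hidmem : (LinearMap.id : (Fin d → ℂ) →ₗ[ℂ] Fin d → ℂ) ∈ p := by
    intro m
    show ρ m ∘ₗ LinearMap.id ∘ₗ ρ m⁻¹ = LinearMap.id
    rw [LinearMap.id_comp, ← Module.End.mul_eq_comp, ← _root_.map_mul, mul_inv_cancel, _root_.map_one]
    rfl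
  have hidne : (LinearMap.id : (Fin d → ℂ) →ₗ[ℂ] Fin d → ℂ) ≠ 0 := by
    intro hcontra
    have hv : (fun _ => (1 : ℂ) : Fin d → ℂ) ≠ 0 := by
      intro hzero
      have := congrFun hzero ⟨0, hd⟩
      simp at this
    have := congrArg (fun f => f (fun _ => (1 : ℂ) : Fin d → ℂ)) hcontra
    simp only [LinearMap.id_apply, LinearMap.zero_apply] at this
    exact hv this
  have hspan : (Submodule.span ℂ {(LinearMap.id : (Fin d → ℂ) →ₗ[ℂ] Fin d → ℂ)}) ≤ p :=
    Submodule.span_le.mpr (Set.singleton_subset_iff.mpr hidmem)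
  have hspanrank : finrank ℂ (Submodule.span ℂ
      {(LinearMap.id : (Fin d → ℂ) →ₗ[ℂ] Fin d → ℂ)}) = 1 :=
    finrank_span_singleton hidne
  have heq : Submodule.span ℂ {(LinearMap.id : (Fin d → ℂ) →ₗ[ℂ] Fin d → ℂ)} = p :=
    Submodule.eq_of_le_of_finrank_le hspan (by rw [hfin, hspanrank])
  intro C hC
  have hCmem : Matrix.toLin' C ∈ p := by
    intro m
    show ρ m ∘ₗ Matrix.toLin' C ∘ₗ ρ m⁻¹ = Matrix.toLin' C
    show Matrix.toLin' (R m) ∘ₗ Matrix.toLin' C ∘ₗ Matrix.toLin' (R m⁻¹) = Matrix.toLin' C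
    rw [← Matrix.toLin'_mul, ← Matrix.toLin'_mul]
    congr 1
    rw [← Matrix.mul_assoc, hC m, Matrix.mul_assoc, ← hmul, mul_inv_cancel, h1, Matrix.mul_one]
  rw [← heq] at hCmem
  obtain ⟨c, hc⟩ := Submodule.mem_span_singleton.mp hCmem
  refine ⟨c, ?_⟩
  have : Matrix.toLin' ((c : ℂ) • (1 : Matrix (Fin d) (Fin d) ℂ)) = Matrix.toLin' C := by
    rw [_root_.map_smul, Matrix.toLin'_one]
    exact hc
  exact (Matrix.toLin'.injective this).symm

lemma exists_intertwiner {d e : ℕ}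
    (R : M → Matrix (Fin d) (Fin d) ℂ) (S : M → Matrix (Fin e) (Fin e) ℂ)
    (hRmul : ∀ x y, R (x * y) = R x * R y) (hR1 : R 1 = 1)
    (hSmul : ∀ x y, S (x * y) = S x * S y) (hS1 : S 1 = 1)
    (hsum : (Fintype.card M : ℂ)⁻¹ * ∑ m : M, (R m).trace * (S m⁻¹).trace = 1) :
    ∃ T : Matrix (Fin d) (Fin e) ℂ, T ≠ 0 ∧ ∀ m, R m * T = T * S m := by
  have hcard : (Fintype.card M : ℂ) ≠ 0 := by exact_mod_cast Fintype.card_ne_zero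
  set ρR := matRep R hRmul hR1
  set ρS := matRep S hSmul hS1
  set p := (Representation.linHom ρS ρR).invariants with hp
  have hfin : finrank ℂ p = 1 := by
    have h := sum_trace_eq R S hRmul hR1 hSmul hS1
    rw [h, ← mul_assoc, inv_mul_cancel₀ hcard, one_mul] at hsum
    exact_mod_cast hsum
  have hpne : p ≠ ⊥ := by
    intro hcontra
    rw [hcontra, finrank_bot] at hfin
    exact zero_ne_one hfin
  obtain ⟨f, hfmem, hfne⟩ := Submodule.exists_mem_ne_zero_of_ne_bot hpne
  refine ⟨LinearMap.toMatrix' f, ?_, ?_⟩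
  · intro hcontra
    apply hfne
    have := congrArg Matrix.toLin' hcontra
    rwa [Matrix.toLin'_toMatrix', map_zero] at this
  · intro m
    have hm := hfmem m
    have hm' : Matrix.toLin' (R m) ∘ₗ f ∘ₗ Matrix.toLin' (S m⁻¹) = f := hm
    have hcomp : Matrix.toLin' (R m) ∘ₗ f = f ∘ₗ Matrix.toLin' (S m) := by
      have := congrArg (fun g => g ∘ₗ Matrix.toLin' (S m)) hm'
      rw [← this, LinearMap.comp_assoc, LinearMap.comp_assoc, ← Matrix.toLin'_mul, ← hSmul,
        inv_mul_cancel, hS1, Matrix.toLin'_one, LinearMap.comp_id]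
    have := congrArg LinearMap.toMatrix' hcomp
    rwa [LinearMap.toMatrix'_comp, LinearMap.toMatrix'_comp, LinearMap.toMatrix'_toLin',
      LinearMap.toMatrix'_toLin'] at this

lemma invariant_eq_top {d : ℕ} (R : M → Matrix (Fin d) (Fin d) ℂ)
    (hmul : ∀ x y, R (x * y) = R x * R y) (h1 : R 1 = 1)
    (hcomm : ∀ C : Matrix (Fin d) (Fin d) ℂ, (∀ m, R m * C = C * R m) → ∃ c : ℂ, C = c • 1)
    (W : Submodule ℂ (Fin d → ℂ)) (hW : ∀ m, ∀ w ∈ W, Matrix.toLin' (R m) w ∈ W)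
    (hbot : W ≠ ⊥) : W = ⊤ := by
  classical
  have hcard : (Fintype.card M : ℂ) ≠ 0 := by exact_mod_cast Fintype.card_ne_zero
  obtain ⟨W', hW'⟩ := Submodule.exists_isCompl W
  set π₀ : (Fin d → ℂ) →ₗ[ℂ] Fin d → ℂ :=
    W.subtype ∘ₗ (W.projectionOnto W' hW') with hπ₀
  have hπfix : ∀ w ∈ W, π₀ w = w := by
    intro w hw
    show (W.subtype) ((W.projectionOnto W' hW') w) = w
    rw [Submodule.projectionOnto_apply_left hW' ⟨w, hw⟩]
    rfl
  have hπrange : ∀ v, π₀ v ∈ W := fun v => ((W.projectionOnto W' hW') v).2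
  set ρ := matRep R hmul h1 with hρ
  set P : (Fin d → ℂ) →ₗ[ℂ] Fin d → ℂ :=
    (Fintype.card M : ℂ)⁻¹ • ∑ m : M, (ρ m) * π₀ * (ρ m⁻¹) with hP
  have hρinv : ∀ g m : M, ρ m⁻¹ = ρ (g * m)⁻¹ * ρ g := by
    intro g m
    rw [← _root_.map_mul]
    congr 1
    group
  have hPcomm : ∀ g, ρ g * P = P * ρ g := by
    intro g
    rw [hP, Algebra.mul_smul_comm, Algebra.smul_mul_assoc]
    congr 1
    rw [Finset.mul_sum, Finset.sum_mul]
    rw [← Equiv.sum_comp (Equiv.mulLeft g) fun m => (ρ m) * π₀ * (ρ m⁻¹) * ρ g]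
    refine Finset.sum_congr rfl fun m _ => ?_
    have hm : (Equiv.mulLeft g) m = g * m := rfl
    rw [hm, hρinv g m]
    rw [← mul_assoc, ← mul_assoc, ← mul_assoc, ← _root_.map_mul]
  have hPmat := hcomm (LinearMap.toMatrix' P) (by
    intro m
    have : Matrix.toLin' (R m * LinearMap.toMatrix' P)
        = Matrix.toLin' (LinearMap.toMatrix' P * R m) := by
      rw [Matrix.toLin'_mul, Matrix.toLin'_mul, Matrix.toLin'_toMatrix']
      show (ρ m) * P = P * (ρ m)
      exact hPcomm m
    have h2 := congrArg LinearMap.toMatrix' this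
    rwa [LinearMap.toMatrix'_toLin', LinearMap.toMatrix'_toLin'] at h2)
  obtain ⟨c, hc⟩ := hPmat
  have hPc : P = c • LinearMap.id := by
    have := congrArg Matrix.toLin' hc
    rwa [Matrix.toLin'_toMatrix', _root_.map_smul, Matrix.toLin'_one] at this
  have hfix : ∀ w ∈ W, P w = w := by
    intro w hw
    rw [hP]
    simp only [LinearMap.smul_apply, LinearMap.coe_sum, Finset.sum_apply]
    have hterm : ∀ m : M, ((ρ m) * π₀ * (ρ m⁻¹)) w = w := by
      intro m
      show (ρ m) (π₀ ((ρ m⁻¹) w)) = w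
      have h1' : (ρ m⁻¹) w ∈ W := hW m⁻¹ w hw
      rw [hπfix _ h1']
      show ((ρ m) * (ρ m⁻¹)) w = w
      rw [← _root_.map_mul, mul_inv_cancel, _root_.map_one]
      rfl
    rw [Finset.sum_congr rfl fun m _ => hterm m, Finset.sum_const, Finset.card_univ]
    rw [← Nat.cast_smul_eq_nsmul ℂ, smul_smul, inv_mul_cancel₀ hcard, one_smul]
  obtain ⟨w₀, hw₀mem, hw₀ne⟩ := Submodule.exists_mem_ne_zero_of_ne_bot hbot
  have hc1 : c = 1 := by
    have h1' := hfix w₀ hw₀mem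
    rw [hPc] at h1'
    simp only [LinearMap.smul_apply, LinearMap.id_apply] at h1'
    have hz : (c - 1) • w₀ = 0 := by
      rw [sub_smul, one_smul, h1', sub_self]
    rcases smul_eq_zero.mp hz with h | h
    · exact sub_eq_zero.mp h
    · exact absurd h hw₀ne
  have hrange : ∀ v, P v ∈ W := by
    intro v
    rw [hP]
    simp only [LinearMap.smul_apply, LinearMap.coe_sum, Finset.sum_apply]
    refine Submodule.smul_mem _ _ (Submodule.sum_mem _ fun m _ => ?_)
    show (ρ m) (π₀ ((ρ m⁻¹) v)) ∈ W
    exact hW m _ (hπrange _)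
  rw [eq_top_iff]
  intro v _
  have hv := hrange v
  rw [hPc, hc1] at hv
  simpa using hv

end RepPart
end OCCAux


theorem order_of_cohomology_class_divides_index_of_extending_subgroup
    {G : Type} [Group G] [Finite G] (N H : Subgroup G) [N.Normal]
    (hNH : N ≤ H) (θ : ↥N → ℂ) (hθ : IsIrrChar ↥N θ) (hinv : IsGInvariant N θ)
    (φ : ↥H → ℂ) (hφ : IsChar ↥H φ)
    (hext : ∀ n : ↥N, φ (Subgroup.inclusion hNH n) = θ n)
    (P : ProjRepOfTriple G N θ) :
    cocycleClassOrder P.a ∣ H.index := by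
  classical
  letI : Fintype G := Fintype.ofFinite G
  letI : Fintype ↥N := Fintype.ofFinite ↥N
  haveI : N.Normal := inferInstance
  -- the matrix representation of N given by restricting X
  set A : ↥N → Matrix (Fin P.d) (Fin P.d) ℂ := fun n => P.X (n : G) with hAdef
  have hAmul : ∀ x y : ↥N, A (x * y) = A x * A y := by
    intro x y
    show P.X ((x : G) * (y : G)) = P.X (x : G) * P.X (y : G)
    exact P.mulN_left x (y : G)
  have hA1 : A 1 = 1 := by
    show P.X ((1 : ↥N) : G) = 1
    rw [OneMemClass.coe_one, P.map_one]
  have hAtr : ∀ n : ↥N, (A n).trace = θ n := fun n => P.traceN n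
  -- the inner product hypothesis as a finite sum
  have hinner : (Fintype.card ↥N : ℂ)⁻¹ * ∑ n : ↥N, θ n * starRingEnd ℂ (θ n) = 1 := by
    have h := hθ.2
    rw [charInner, Nat.card_eq_fintype_card, finsum_eq_sum_of_fintype] at h
    exact h
  have hsumA : (Fintype.card ↥N : ℂ)⁻¹ * ∑ n : ↥N, (A n).trace * (A n⁻¹).trace = 1 := by
    rw [Finset.sum_congr rfl fun n _ => ?_]
    · exact hinner
    · rw [hAtr n, OCCAux.trace_rep_inv A hAmul hA1 n, hAtr n]
  have hcomm := OCCAux.comm_scalar A hAmul hA1 hsumA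
  -- positivity of the dimension
  have hd : 0 < P.d := by
    rcases Nat.eq_zero_or_pos P.d with h0 | h0
    · exfalso
      haveI : IsEmpty (Fin P.d) := by rw [h0]; infer_instance
      have hz : ∑ n : ↥N, (A n).trace * (A n⁻¹).trace = 0 := by
        refine Finset.sum_eq_zero fun n _ => ?_
        have : (A n).trace = 0 := by simp [Matrix.trace]
        rw [this, zero_mul]
      rw [hz, mul_zero] at hsumA
      exact zero_ne_one hsumA
    · exact h0
  have hMat1ne : (1 : Matrix (Fin P.d) (Fin P.d) ℂ) ≠ 0 := by
    intro hcontra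
    have := congrFun (congrFun hcontra ⟨0, hd⟩) ⟨0, hd⟩
    rw [Matrix.one_apply_eq] at this
    simp at this
  -- the representation of H affording φ
  obtain ⟨V, hV⟩ := hφ
  have hθ1 : θ 1 = (P.d : ℂ) := by
    have h := P.traceN 1
    rw [OneMemClass.coe_one, P.map_one, Matrix.trace_one] at h
    rw [← h]
    simp
  have hrk : Module.finrank ℂ V = P.d := by
    have h1 := hext 1
    rw [map_one] at h1
    rw [hV 1, FDRep.char_one] at h1
    rw [hθ1] at h1
    exact_mod_cast h1
  set b := Module.finBasisOfFinrankEq ℂ V hrk with hbdef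
  set Y : ↥H → Matrix (Fin P.d) (Fin P.d) ℂ := fun h => LinearMap.toMatrix b b (V.ρ h)
    with hYdef
  have hYmul : ∀ g h : ↥H, Y (g * h) = Y g * Y h := by
    intro g h
    show LinearMap.toMatrix b b (V.ρ (g * h)) = _
    rw [map_mul, LinearMap.toMatrix_mul]
  have hY1 : Y 1 = 1 := by
    show LinearMap.toMatrix b b (V.ρ 1) = 1
    rw [map_one, LinearMap.toMatrix_one]
  have hYtr : ∀ h : ↥H, (Y h).trace = φ h := by
    intro h
    rw [hV h]
    show (LinearMap.toMatrix b b (V.ρ h)).trace = _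
    rw [← LinearMap.trace_eq_matrix_trace ℂ b (V.ρ h)]
    rfl
  -- the matrix representation of N from Y
  set Bm : ↥N → Matrix (Fin P.d) (Fin P.d) ℂ := fun n => Y (Subgroup.inclusion hNH n)
    with hBmdef
  have hBmul : ∀ x y : ↥N, Bm (x * y) = Bm x * Bm y := by
    intro x y
    show Y (Subgroup.inclusion hNH (x * y)) = _
    rw [map_mul, hYmul]
  have hB1 : Bm 1 = 1 := by show Y (Subgroup.inclusion hNH 1) = 1; rw [map_one, hY1]
  have hBtr : ∀ n : ↥N, (Bm n).trace = θ n := by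
    intro n
    show (Y (Subgroup.inclusion hNH n)).trace = θ n
    rw [hYtr, hext]
  have hsumAB : (Fintype.card ↥N : ℂ)⁻¹ * ∑ n : ↥N, (A n).trace * (Bm n⁻¹).trace = 1 := by
    rw [Finset.sum_congr rfl fun n _ => ?_]
    · exact hinner
    · rw [hAtr n, OCCAux.trace_rep_inv Bm hBmul hB1 n, hBtr n]
  obtain ⟨T, hTne, hTint⟩ := OCCAux.exists_intertwiner A Bm hAmul hA1 hBmul hB1 hsumAB
  -- T is invertible
  have hTdet : IsUnit T.det := by
    have hWtop : LinearMap.range (Matrix.toLin' T) = ⊤ := by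
      refine OCCAux.invariant_eq_top A hAmul hA1 hcomm _ ?_ ?_
      · rintro m w ⟨x, rfl⟩
        refine ⟨Matrix.toLin' (Bm m) x, ?_⟩
        rw [← Matrix.toLin'_mul_apply, ← hTint m, Matrix.toLin'_mul_apply]
      · intro hcontra
        apply hTne
        have hT0 : Matrix.toLin' T = 0 := LinearMap.range_eq_bot.mp hcontra
        exact (Matrix.toLin'.map_eq_zero_iff).mp hT0
    have hsurj : Function.Surjective (Matrix.toLin' T) := LinearMap.range_eq_top.mp hWtop
    have hinj : Function.Injective (Matrix.toLin' T) :=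
      (LinearMap.injective_iff_surjective).mpr hsurj
    have hinjmv : Function.Injective T.mulVec := by
      intro x y hxy
      apply hinj
      rw [Matrix.toLin'_apply, Matrix.toLin'_apply]
      exact hxy
    have hunit2 : IsUnit T := Matrix.mulVec_injective_iff_isUnit.mp hinjmv
    exact (Matrix.isUnit_iff_isUnit_det T).mp hunit2
  have hTl : T * T⁻¹ = 1 := Matrix.mul_nonsing_inv T hTdet
  have hTr : T⁻¹ * T = 1 := Matrix.nonsing_inv_mul T hTdet
  -- the conjugated representation of H
  set Z : ↥H → Matrix (Fin P.d) (Fin P.d) ℂ := fun h => T * Y h * T⁻¹ with hZdef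
  have hZmul : ∀ g h : ↥H, Z (g * h) = Z g * Z h := by
    intro g h
    show T * Y (g * h) * T⁻¹ = (T * Y g * T⁻¹) * (T * Y h * T⁻¹)
    rw [hYmul]
    have key : (T * Y g * T⁻¹) * (T * Y h * T⁻¹) = T * (Y g * Y h) * T⁻¹ := by
      calc (T * Y g * T⁻¹) * (T * Y h * T⁻¹)
          = T * (Y g * ((T⁻¹ * T) * (Y h * T⁻¹))) := by simp only [Matrix.mul_assoc]
        _ = T * (Y g * (Y h * T⁻¹)) := by rw [hTr, Matrix.one_mul]
        _ = T * (Y g * Y h) * T⁻¹ := by simp only [Matrix.mul_assoc]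
    rw [key]
  have hZ1 : Z 1 = 1 := by
    show T * Y 1 * T⁻¹ = 1
    rw [hY1, Matrix.mul_one, hTl]
  have hZN : ∀ n : ↥N, Z (Subgroup.inclusion hNH n) = A n := by
    intro n
    show T * Bm n * T⁻¹ = A n
    rw [← hTint n, Matrix.mul_assoc, hTl, Matrix.mul_one]
  have hZunit : ∀ h : ↥H, IsUnit (Z h) := by
    intro h
    refine ⟨⟨Z h, Z h⁻¹, ?_, ?_⟩, rfl⟩
    · rw [← hZmul, mul_inv_cancel, hZ1]
    · rw [← hZmul, inv_mul_cancel, hZ1]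
  have hZne : ∀ h : ↥H, Z h ≠ 0 := by
    intro h hcontra
    obtain ⟨u, hu⟩ := hZunit h
    apply hMat1ne
    calc (1 : Matrix (Fin P.d) (Fin P.d) ℂ)
        = (u : Matrix (Fin P.d) (Fin P.d) ℂ) * ((u⁻¹ : (Matrix (Fin P.d) (Fin P.d) ℂ)ˣ) :
            Matrix (Fin P.d) (Fin P.d) ℂ) := u.mul_inv.symm
      _ = 0 := by rw [hu, hcontra, zero_mul]
  -- conjugation action
  set ncnj : ↥H → ↥N → ↥N := fun h n =>
    ⟨(h : G) * (n : G) * (h : G)⁻¹,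
      (inferInstance : N.Normal).conj_mem (n : G) n.2 (h : G)⟩ with hncnj
  have hXA : ∀ (h : ↥H) (n : ↥N), P.X (h : G) * A n = A (ncnj h n) * P.X (h : G) := by
    intro h n
    have h1 : (h : G) * (n : G) = ((ncnj h n : ↥N) : G) * (h : G) := by
      show _ = ((h : G) * (n : G) * (h : G)⁻¹) * (h : G)
      rw [inv_mul_cancel_right]
    calc P.X (h : G) * A n = P.X ((h : G) * (n : G)) := (P.mulN_right n (h : G)).symm
      _ = P.X (((ncnj h n : ↥N) : G) * (h : G)) := by rw [h1]
      _ = A (ncnj h n) * P.X (h : G) := P.mulN_left (ncnj h n) (h : G)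
  have hHconj : ∀ (h : ↥H) (n : ↥N),
      h * Subgroup.inclusion hNH n = Subgroup.inclusion hNH (ncnj h n) * h := by
    intro h n
    apply Subtype.ext
    show (h : G) * (n : G) = ((h : G) * (n : G) * (h : G)⁻¹) * (h : G)
    rw [inv_mul_cancel_right]
  have hZA : ∀ (h : ↥H) (n : ↥N), Z h * A n = A (ncnj h n) * Z h := by
    intro h n
    rw [← hZN n, ← hZmul, hHconj, hZmul, hZN]
  have hncnj_inv : ∀ (h : ↥H) (n : ↥N), ncnj h (ncnj h⁻¹ n) = n := by
    intro h n
    apply Subtype.ext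
    show (h : G) * (((h⁻¹ : ↥H) : G) * (n : G) * (((h⁻¹ : ↥H) : G))⁻¹) * ((h : G))⁻¹ = (n : G)
    rw [show ((h⁻¹ : ↥H) : G) = ((h : G))⁻¹ from rfl]
    group
  -- existence of the scalars
  have hscal : ∀ h : ↥H, ∃ c : ℂˣ, P.X (h : G) = (c : ℂ) • Z h := by
    intro h
    set C : Matrix (Fin P.d) (Fin P.d) ℂ := P.X (h : G) * Z h⁻¹ with hCdef
    have hCA : ∀ n : ↥N, A n * C = C * A n := by
      intro n
      have h1 : C * A n = P.X (h : G) * (Z h⁻¹ * A n) := by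
        rw [hCdef, Matrix.mul_assoc]
      rw [hZA h⁻¹ n] at h1
      have h2 : P.X (h : G) * (A (ncnj h⁻¹ n) * Z h⁻¹)
          = (P.X (h : G) * A (ncnj h⁻¹ n)) * Z h⁻¹ := by rw [Matrix.mul_assoc]
      rw [h2, hXA h (ncnj h⁻¹ n), hncnj_inv h n] at h1
      rw [h1, Matrix.mul_assoc]
    obtain ⟨c, hc⟩ := hcomm C hCA
    have hCunit : IsUnit C := (P.unit (h : G)).mul (hZunit h⁻¹)
    have hcne : c ≠ 0 := by
      intro h0
      rw [h0, zero_smul] at hc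
      obtain ⟨u, hu⟩ := hCunit
      apply hMat1ne
      calc (1 : Matrix (Fin P.d) (Fin P.d) ℂ)
          = (u : Matrix (Fin P.d) (Fin P.d) ℂ) * ((u⁻¹ : (Matrix (Fin P.d) (Fin P.d) ℂ)ˣ) :
              Matrix (Fin P.d) (Fin P.d) ℂ) := u.mul_inv.symm
        _ = 0 := by rw [hu, hc, zero_mul]
    refine ⟨Units.mk0 c hcne, ?_⟩
    have hZZ : Z h⁻¹ * Z h = 1 := by rw [← hZmul, inv_mul_cancel, hZ1]
    calc P.X (h : G) = P.X (h : G) * (Z h⁻¹ * Z h) := by rw [hZZ, Matrix.mul_one]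
      _ = C * Z h := by rw [hCdef]; exact (Matrix.mul_assoc _ _ _).symm
      _ = (c • (1 : Matrix (Fin P.d) (Fin P.d) ℂ)) * Z h := by rw [hc]
      _ = (c : ℂ) • Z h := by rw [Matrix.smul_mul, Matrix.one_mul]
  set μ : ↥H → ℂˣ := fun h => (hscal h).choose with hμdef
  have hXZ : ∀ h : ↥H, P.X (h : G) = ((μ h : ℂˣ) : ℂ) • Z h := fun h => (hscal h).choose_spec
  have huniq : ∀ (h : ↥H) (c c' : ℂ), c • Z h = c' • Z h → c = c' := by
    intro h c c' hcc
    have : (c - c') • Z h = 0 := by rw [sub_smul, hcc, sub_self]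
    rcases smul_eq_zero.mp this with h1 | h1
    · exact sub_eq_zero.mp h1
    · exact absurd h1 (hZne h)
  -- the cocycle identity for μ
  have hmuC : ∀ g h : ↥H, ((μ g : ℂˣ) : ℂ) * ((μ h : ℂˣ) : ℂ)
      = (P.a ((g : G) : G ⧸ N) ((h : G) : G ⧸ N) : ℂ) * ((μ (g * h) : ℂˣ) : ℂ) := by
    intro g h
    have hf := P.factor (g : G) (h : G)
    have hco : (g : G) * (h : G) = ((g * h : ↥H) : G) := rfl
    rw [hco, hXZ g, hXZ h, hXZ (g * h)] at hf
    have hL : (((μ g : ℂˣ) : ℂ) • Z g) * (((μ h : ℂˣ) : ℂ) • Z h)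
        = ((((μ g : ℂˣ) : ℂ) * ((μ h : ℂˣ) : ℂ))) • Z (g * h) := by
      rw [Matrix.smul_mul, Matrix.mul_smul, ← hZmul, smul_smul]
    have hR : (P.a ((g : G) : G ⧸ N) ((h : G) : G ⧸ N) : ℂ) •
        (((μ (g * h) : ℂˣ) : ℂ) • Z (g * h))
        = ((P.a ((g : G) : G ⧸ N) ((h : G) : G ⧸ N) : ℂ) * ((μ (g * h) : ℂˣ) : ℂ))
          • Z (g * h) := by rw [smul_smul]
    rw [hL, hR] at hf
    exact huniq (g * h) _ _ hf
  have hmuU : ∀ g h : ↥H, μ g * μ h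
      = P.a ((g : G) : G ⧸ N) ((h : G) : G ⧸ N) * μ (g * h) := by
    intro g h
    apply Units.ext
    push_cast
    exact hmuC g h
  -- μ is constant on N-cosets
  have hconst : ∀ (g : ↥H) (n : ↥N), μ (g * Subgroup.inclusion hNH n) = μ g := by
    intro g n
    have h1 : P.X ((g * Subgroup.inclusion hNH n : ↥H) : G)
        = ((μ g : ℂˣ) : ℂ) • Z (g * Subgroup.inclusion hNH n) := by
      have hco : ((g * Subgroup.inclusion hNH n : ↥H) : G) = (g : G) * (n : G) := rfl
      rw [hco, P.mulN_right n (g : G), hXZ g]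
      rw [hZmul g (Subgroup.inclusion hNH n), hZN n]
      rw [Matrix.smul_mul]
    apply Units.ext
    exact (huniq _ _ _ ((hXZ (g * Subgroup.inclusion hNH n)).symm.trans h1))
  -- μ only depends on the N-coset
  have hwd : ∀ g g' : ↥H, ((g : G) : G ⧸ N) = ((g' : G) : G ⧸ N) → μ g = μ g' := by
    intro g g' hgg
    have hn : (g : G)⁻¹ * (g' : G) ∈ N := QuotientGroup.eq.mp hgg
    set n : ↥N := ⟨(g : G)⁻¹ * (g' : G), hn⟩ with hndef
    have hg' : g' = g * Subgroup.inclusion hNH n := by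
      apply Subtype.ext
      show (g' : G) = (g : G) * ((g : G)⁻¹ * (g' : G))
      rw [mul_inv_cancel_left]
    rw [hg', hconst]
  -- the function on the quotient
  set F : (G ⧸ N) → ℂˣ := fun q =>
    if hq : q.out ∈ H then μ ⟨q.out, hq⟩ else 1 with hFdef
  have hmemH : ∀ x : G ⧸ N, x ∈ Subgroup.map (QuotientGroup.mk' N) H → x.out ∈ H := by
    intro x hx
    obtain ⟨h, hh, hmk⟩ := hx
    have hout : ((x.out : G) : G ⧸ N) = x := QuotientGroup.out_eq' x
    have heq : ((h : G) : G ⧸ N) = ((x.out : G) : G ⧸ N) := by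
      rw [hout]
      exact hmk
    have hn : h⁻¹ * x.out ∈ N := QuotientGroup.eq.mp heq
    have : x.out = h * (h⁻¹ * x.out) := by rw [mul_inv_cancel_left]
    rw [this]
    exact H.mul_mem hh (hNH hn)
  have hFval : ∀ g : ↥H, F (((g : G) : G ⧸ N)) = μ g := by
    intro g
    set q : G ⧸ N := ((g : G) : G ⧸ N) with hqdef
    have hqout : q.out ∈ H :=
      hmemH q ⟨(g : G), g.2, rfl⟩
    have h1 : F q = μ ⟨q.out, hqout⟩ := dif_pos hqout
    rw [h1]
    apply hwd
    show ((q.out : G) : G ⧸ N) = ((g : G) : G ⧸ N)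
    rw [QuotientGroup.out_eq' q]
  -- the subgroup K of the quotient & restriction is a coboundary
  set K : Subgroup (G ⧸ N) := Subgroup.map (QuotientGroup.mk' N) H with hKdef
  have hKindex : K.index = H.index :=
    Subgroup.index_map_eq H (QuotientGroup.mk'_surjective N)
      (by rw [QuotientGroup.ker_mk']; exact hNH)
  have hindexne : H.index ≠ 0 := Subgroup.index_ne_zero_of_finite
  have hres : ∀ x ∈ K, ∀ y ∈ K, P.a x y = F x * F y * (F (x * y))⁻¹ := by
    intro x hx y hy
    set gx : ↥H := ⟨x.out, hmemH x hx⟩ with hgxdef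
    set gy : ↥H := ⟨y.out, hmemH y hy⟩ with hgydef
    have hgx : ((gx : G) : G ⧸ N) = x := QuotientGroup.out_eq' x
    have hgy : ((gy : G) : G ⧸ N) = y := QuotientGroup.out_eq' y
    have hxy : x * y = (((gx * gy : ↥H) : G) : G ⧸ N) := by
      rw [← hgx, ← hgy]
      rfl
    have hFx : F x = μ gx := by rw [← hgx]; exact hFval gx
    have hFy : F y = μ gy := by rw [← hgy]; exact hFval gy
    have hFxy : F (x * y) = μ (gx * gy) := by rw [hxy]; exact hFval (gx * gy)
    rw [hFx, hFy, hFxy, ← hgx, ← hgy]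
    rw [eq_mul_inv_iff_mul_eq]
    exact (hmuU gx gy).symm
  have hKne : K.index ≠ 0 := by rw [hKindex]; exact hindexne
  have hcb := OCCAux.coboundary_pow_of_res P.cocycle K hKne F hres
  rw [hKindex] at hcb
  exact OCCAux.order_dvd P.a (Nat.pos_of_ne_zero hindexne) hcb
end
end

section
/- Let Ḡ be a finite group, π a set of primes, and μ̂ a complex-valued function defined on the π'-elements of Ḡ that is constant on conjugacy classes, takes roots of unity as values, and restricts to a linear character on every π'-subgroup of Ḡ. Define λ(y) = μ̂(y_{π'}) for y ∈ Ḡ. Then λ is a linear character of Ḡ. -/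
open scoped BigOperators
noncomputable section

namespace PiProof

variable {σ τ : Set ℕ} {n q : ℕ}

lemma piPart_pos (σ : Set ℕ) (n : ℕ) : 0 < Nat.piPart σ n := by
  unfold Nat.piPart
  rw [Finsupp.prod]
  apply Finset.prod_pos
  intro p hp
  split
  · exact pow_pos (Nat.prime_of_mem_primeFactors (by simpa using hp)).pos _
  · exact one_pos

open Classical in
lemma piPart_mul_compl (σ : Set ℕ) (hn : n ≠ 0) :
    Nat.piPart σ n * Nat.piPart σᶜ n = n := by
  unfold Nat.piPart
  rw [Finsupp.prod, Finsupp.prod, ← Finset.prod_mul_distrib]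
  have hself := Nat.factorization_prod_pow_eq_self hn
  rw [Finsupp.prod] at hself
  refine Eq.trans (Finset.prod_congr rfl fun p _ => ?_) hself
  by_cases h : p ∈ σ <;> simp [h, Set.mem_compl_iff]

lemma prime_dvd_piPart (hq : q.Prime) (h : q ∣ Nat.piPart σ n) : q ∈ σ ∧ q ∣ n := by
  unfold Nat.piPart at h
  rw [Finsupp.prod] at h
  obtain ⟨p, hp, hpd⟩ := hq.prime.exists_mem_finset_dvd h
  by_cases hσ : p ∈ σ
  · rw [if_pos hσ] at hpd
    have hq_eq : q = p := by
      have := hq.dvd_of_dvd_pow hpd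
      exact (Nat.prime_dvd_prime_iff_eq hq (Nat.prime_of_mem_primeFactors (by simpa using hp))).mp this
    subst hq_eq
    exact ⟨hσ, Nat.dvd_of_mem_primeFactors (by simpa using hp)⟩
  · rw [if_neg hσ] at hpd
    exact absurd (Nat.dvd_one.mp hpd) hq.ne_one

lemma coprime_of_mem {x y : ℕ} (hx : ∀ r, r.Prime → r ∣ x → r ∈ σ)
    (hy : ∀ r, r.Prime → r ∣ y → r ∉ σ) : Nat.Coprime x y := by
  by_contra h
  obtain ⟨r, hr, hrd⟩ := Nat.exists_prime_and_dvd h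
  exact hy r hr (hrd.trans (Nat.gcd_dvd_right x y))
    (hx r hr (hrd.trans (Nat.gcd_dvd_left x y)))

lemma coprime_piPart_compl (σ : Set ℕ) (n : ℕ) :
    Nat.Coprime (Nat.piPart σ n) (Nat.piPart σᶜ n) :=
  coprime_of_mem (fun r hr hd => (prime_dvd_piPart hr hd).1)
    (fun r hr hd => (prime_dvd_piPart (σ := σᶜ) hr hd).1)

lemma piPart_dvd (σ : Set ℕ) (n : ℕ) : Nat.piPart σ n ∣ n := by
  rcases eq_or_ne n 0 with rfl | hn
  · exact dvd_zero _
  · exact ⟨_, (piPart_mul_compl σ hn).symm⟩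

lemma isPiNumber_piPart (σ : Set ℕ) (n : ℕ) : IsPiNumber σ (Nat.piPart σ n) :=
  fun _ hq hd => (prime_dvd_piPart hq hd).1

open Classical in
lemma piPart_dvd_of_subset (h : σ ⊆ τ) (n : ℕ) : Nat.piPart σ n ∣ Nat.piPart τ n := by
  unfold Nat.piPart
  rw [Finsupp.prod, Finsupp.prod]
  refine Finset.prod_dvd_prod_of_dvd _ _ fun p _ => ?_
  by_cases hσ : p ∈ σ
  · simp [hσ, h hσ]
  · simp [hσ]

open Classical in
lemma piPart_singleton (p n : ℕ) : Nat.piPart {p} n = p ^ n.factorization p := by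
  unfold Nat.piPart
  rw [Finsupp.prod]
  by_cases hp : p ∈ n.factorization.support
  · rw [Finset.prod_eq_single_of_mem p hp]
    · simp
    · intro b _ hb
      simp [Set.mem_singleton_iff, hb]
  · rw [Finsupp.notMem_support_iff.mp hp, pow_zero]
    refine Finset.prod_eq_one fun b hb => ?_
    have : b ≠ p := fun h => hp (h ▸ hb)
    simp [Set.mem_singleton_iff, this]

open Classical in
lemma piPart_compl_eq_prod (π : Set ℕ) (n : ℕ) :
    Nat.piPart πᶜ n = ∏ q ∈ n.primeFactors.filter (fun q => q ∉ π), Nat.piPart {q} n := by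
  unfold Nat.piPart
  rw [Finsupp.prod, Finset.prod_filter]
  rw [Nat.support_factorization]
  refine Finset.prod_congr rfl fun q hq => ?_
  have hqs : q ∈ n.factorization.support := by simpa using hq
  by_cases h : q ∈ π
  · simp only [Set.mem_compl_iff, h, not_true_eq_false, if_false, if_neg (fun hh : ¬ q ∈ π => hh h)]
  · rw [if_pos (by exact h), if_pos (by exact h)]
    exact (piPart_singleton q n).symm

section Elem
variable {G : Type} [Group G] [Finite G]

lemma elemPiPart_def (σ : Set ℕ) (g : G) :
    elemPiPart σ g
      = g ^ (Nat.piPart σᶜ (orderOf g) ^ Nat.totient (Nat.piPart σ (orderOf g))) := by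
  unfold elemPiPart
  have hn : orderOf g ≠ 0 := (orderOf_pos g).ne'
  rw [Nat.div_eq_of_eq_mul_left (piPart_pos σ _)
    (by rw [mul_comm]; exact (piPart_mul_compl σ hn).symm)]

lemma expo_pos (σ : Set ℕ) (n : ℕ) :
    0 < Nat.piPart σᶜ n ^ Nat.totient (Nat.piPart σ n) :=
  pow_pos (piPart_pos _ _) _

lemma expo_modEq (σ : Set ℕ) (n : ℕ) :
    Nat.piPart σᶜ n ^ Nat.totient (Nat.piPart σ n) ≡ 1 [MOD Nat.piPart σ n] :=
  Nat.ModEq.pow_totient (coprime_piPart_compl σ n).symm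

lemma piPart_dvd_expo_sub_one (σ : Set ℕ) (n : ℕ) :
    Nat.piPart σ n ∣ Nat.piPart σᶜ n ^ Nat.totient (Nat.piPart σ n) - 1 :=
  (Nat.modEq_iff_dvd' (expo_pos σ n)).mp (expo_modEq σ n).symm

lemma compl_dvd_expo (σ : Set ℕ) (n : ℕ) :
    Nat.piPart σᶜ n ∣ Nat.piPart σᶜ n ^ Nat.totient (Nat.piPart σ n) :=
  dvd_pow_self _ (Nat.totient_pos.mpr (piPart_pos σ n)).ne'

lemma orderOf_elemPiPart (σ : Set ℕ) (g : G) :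
    orderOf (elemPiPart σ g) = Nat.piPart σ (orderOf g) := by
  have hn : orderOf g ≠ 0 := (orderOf_pos g).ne'
  rw [elemPiPart_def, orderOf_pow]
  set n := orderOf g with hndef
  set a := Nat.piPart σ n with hadef
  set b := Nat.piPart σᶜ n with hbdef
  set E := b ^ Nat.totient a with hEdef
  have hab : a * b = n := piPart_mul_compl σ hn
  have hco : Nat.Coprime a E := (coprime_piPart_compl σ n).pow_right _
  have h2 : b ∣ Nat.gcd n E := Nat.dvd_gcd (piPart_dvd σᶜ n) (compl_dvd_expo σ n)
  have h1 : Nat.gcd n E ∣ b := by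
    refine Nat.Coprime.dvd_of_dvd_mul_left
      (Nat.Coprime.coprime_dvd_left (Nat.gcd_dvd_right n E) hco.symm) ?_
    rw [hab]; exact Nat.gcd_dvd_left n E
  rw [Nat.dvd_antisymm h1 h2]
  exact Nat.div_eq_of_eq_mul_left (piPart_pos σᶜ n) hab.symm

lemma pow_eq_elemPiPart_pow {σ : Set ℕ} {g : G} {k : ℕ}
    (h : IsPiNumber σ (orderOf (g ^ k))) : g ^ k = elemPiPart σ g ^ k := by
  have hn : orderOf g ≠ 0 := (orderOf_pos g).ne'
  rw [elemPiPart_def, ← pow_mul, pow_eq_pow_iff_modEq,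
    Nat.modEq_iff_dvd' (Nat.le_mul_of_pos_left k (expo_pos σ (orderOf g)))]
  set n := orderOf g with hndef
  set a := Nat.piPart σ n with hadef
  set b := Nat.piPart σᶜ n with hbdef
  set E := b ^ Nat.totient a with hEdef
  have hab : a * b = n := piPart_mul_compl σ hn
  have hbk : b ∣ k := by
    have hord : orderOf (g ^ k) = n / Nat.gcd n k := orderOf_pow g
    have hco : Nat.Coprime b (n / Nat.gcd n k) :=
      (coprime_of_mem (σ := σ) (fun r hr hd => h r hr (hord ▸ hd))
        (fun r hr hd => fun hmem => (prime_dvd_piPart (σ := σᶜ) hr hd).1 hmem)).symm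
    have hdvd : b ∣ (n / Nat.gcd n k) * Nat.gcd n k := by
      rw [Nat.div_mul_cancel (Nat.gcd_dvd_left _ _)]
      exact piPart_dvd σᶜ _
    exact (hco.dvd_of_dvd_mul_left hdvd).trans (Nat.gcd_dvd_right _ _)
  have hsub : E * k - k = (E - 1) * k := by rw [Nat.sub_mul, one_mul]
  rw [hsub, ← hab]
  exact mul_dvd_mul (piPart_dvd_expo_sub_one σ n) hbk

end Elem

section Mu
variable {G : Type} [Group G] [Finite G] (π : Set ℕ) (μ : G → ℂ)

/-- μ restricted to a `π'`-subgroup, as a monoid hom into `ℂ`. -/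
def muHom (B : Subgroup G) (h1 : μ (1 : G) = 1)
    (hm : ∀ b c : ↥B, μ ((b : G) * (c : G)) = μ (b : G) * μ (c : G)) : ↥B →* ℂ where
  toFun b := μ (b : G)
  map_one' := by simpa using h1
  map_mul' b c := by simpa using hm b c

variable (hconj : ∀ x h : G, IsPiNumber πᶜ (orderOf x) → μ (h * x * h⁻¹) = μ x)
variable (hlin : ∀ B : Subgroup G, IsPiNumber πᶜ (Nat.card ↥B) →
    μ (1 : G) = 1 ∧ ∀ b c : ↥B, μ ((b : G) * (c : G)) = μ (b : G) * μ (c : G))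

include hlin in
lemma mu_one : μ (1 : G) = 1 := by
  refine (hlin ⊥ ?_).1
  intro q hq hd
  rw [Subgroup.card_bot] at hd
  exact absurd (Nat.dvd_one.mp hd) hq.ne_one

include hlin in
lemma mu_pow (x : G) (hx : IsPiNumber πᶜ (orderOf x)) (m : ℕ) : μ (x ^ m) = μ x ^ m := by
  have hB : IsPiNumber πᶜ (Nat.card ↥(Subgroup.zpowers x)) := by
    rw [Nat.card_zpowers]; exact hx
  have := (muHom μ (Subgroup.zpowers x) (mu_one π μ hlin) (hlin _ hB).2).map_pow
    ⟨x, Subgroup.mem_zpowers x⟩ m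
  simpa [muHom] using this

include hconj hlin in
lemma exists_linear_part {p : ℕ} (hp : p.Prime) (hpπ : p ∉ π) (hpG : p ∣ Nat.card G) :
    ∃ lp : G →* ℂˣ, ∀ y : G, (lp y : ℂ) = μ (elemPiPart ({p} : Set ℕ) y) := by
  classical
  haveI : Fact p.Prime := ⟨hp⟩
  obtain ⟨P⟩ : Nonempty (Sylow p G) := inferInstance
  have h1 : μ (1 : G) = 1 := mu_one π μ hlin
  have hcardP : Nat.card ↥(P : Subgroup G) = p ^ (Nat.card G).factorization p :=
    Sylow.card_eq_multiplicity P
  have hBP : IsPiNumber πᶜ (Nat.card ↥(P : Subgroup G)) := by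
    rw [hcardP]
    intro r hr hd
    rw [(Nat.prime_dvd_prime_iff_eq hr hp).mp (hr.dvd_of_dvd_pow hd)]
    exact hpπ
  set ν : ↥(P : Subgroup G) →* ℂˣ :=
    (muHom μ (P : Subgroup G) h1 (hlin _ hBP).2).toHomUnits with hν
  -- Value of μ on the p-part of any element, as needed for transfer factors.
  have hpiPartPi : ∀ y : G, IsPiNumber πᶜ (orderOf (elemPiPart ({p} : Set ℕ) y)) := by
    intro y
    rw [orderOf_elemPiPart]
    intro r hr hd
    rw [Set.eq_of_mem_singleton (prime_dvd_piPart hr hd).1]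
    exact hpπ
  have key : ∀ (g : G) (k : ℕ) (u : G), u⁻¹ * g ^ k * u ∈ (P : Subgroup G) →
      μ (u⁻¹ * g ^ k * u) = μ (elemPiPart ({p} : Set ℕ) g) ^ k := by
    intro g k u hx
    have hordx : orderOf (u⁻¹ * g ^ k * u) = orderOf (g ^ k) := by
      have := orderOf_injective (MulAut.conj u⁻¹).toMonoidHom (MulEquiv.injective _) (g ^ k)
      simpa [MulAut.conj_apply, mul_assoc] using this
    have hdvd : orderOf (g ^ k) ∣ p ^ (Nat.card G).factorization p := by
      rw [← hordx, ← hcardP]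
      exact Subgroup.orderOf_dvd_natCard _ hx
    have hppow : ∀ r : ℕ, r.Prime → r ∣ orderOf (g ^ k) → r = p := fun r hr hd =>
      (Nat.prime_dvd_prime_iff_eq hr hp).mp (hr.dvd_of_dvd_pow (hd.trans hdvd))
    have hpiN : IsPiNumber πᶜ (orderOf (g ^ k)) := fun r hr hd => by
      rw [hppow r hr hd]; exact hpπ
    have h5 : μ (u⁻¹ * g ^ k * u) = μ (g ^ k) := by
      have := hconj (g ^ k) u⁻¹ hpiN
      simpa using this
    rw [h5, pow_eq_elemPiPart_pow (σ := ({p} : Set ℕ))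
      (fun r hr hd => Set.mem_singleton_iff.mpr (hppow r hr hd))]
    exact mu_pow π μ hlin _ (hpiPartPi g) k
  -- transfer evaluation
  have hval : ∀ g : G, ((MonoidHom.transfer ν) g : ℂ)
      = μ (elemPiPart ({p} : Set ℕ) g) ^ (P : Subgroup G).index := by
    intro g
    letI : Fintype (G ⧸ (P : Subgroup G)) := (P : Subgroup G).fintypeQuotientOfFiniteIndex
    rw [MonoidHom.transfer_eq_prod_quotient_orbitRel_zpowers_quot]
    rw [← Units.coeHom_apply, map_prod]
    have hterm : ∀ q : Quotient (MulAction.orbitRel (↥(Subgroup.zpowers g))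
        (G ⧸ (P : Subgroup G))), q ∈ Finset.univ →
        (Units.coeHom ℂ) (ν ⟨(Quotient.out q.out)⁻¹ *
            g ^ Function.minimalPeriod (fun x => g • x) q.out * Quotient.out q.out,
          QuotientGroup.out_conj_pow_minimalPeriod_mem (P : Subgroup G) g q.out⟩)
        = μ (elemPiPart ({p} : Set ℕ) g) ^
            Function.minimalPeriod (fun x => g • x) q.out := by
      intro q _
      rw [Units.coeHom_apply, hν, MonoidHom.coe_toHomUnits]
      exact key g _ _ (QuotientGroup.out_conj_pow_minimalPeriod_mem (P : Subgroup G) g q.out)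
    rw [Finset.prod_congr rfl hterm, Finset.prod_pow_eq_pow_sum]
    congr 1
    -- sum of minimal periods is the index
    rw [Subgroup.index_eq_card, Nat.card_eq_fintype_card,
      Fintype.card_congr (MulAction.selfEquivSigmaOrbits (↥(Subgroup.zpowers g))
        (G ⧸ (P : Subgroup G))), Fintype.card_sigma]
    exact Finset.sum_congr rfl fun q _ => MulAction.minimalPeriod_eq_card g q.out
  -- invert the index modulo the order of the Sylow subgroup
  have hnd : ¬ p ∣ (P : Subgroup G).index := P.not_dvd_index
  have hcop : Nat.Coprime ((P : Subgroup G).index) (Nat.card ↥(P : Subgroup G)) := by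
    rw [hcardP]
    exact Nat.Coprime.pow_right _ ((hp.coprime_iff_not_dvd).mpr hnd).symm
  have hlt : 1 < Nat.card ↥(P : Subgroup G) := by
    rw [hcardP]
    exact Nat.one_lt_pow (hp.factorization_pos_of_dvd Nat.card_pos.ne' hpG).ne' hp.one_lt
  obtain ⟨c, -, hc⟩ := Nat.exists_mul_mod_eq_one_of_coprime hcop hlt
  refine ⟨(MonoidHom.transfer ν) ^ c, fun y => ?_⟩
  rw [MonoidHom.pow_apply, Units.val_pow_eq_pow_val, hval y, ← pow_mul]
  have hordgp : orderOf (elemPiPart ({p} : Set ℕ) y) ∣ Nat.card ↥(P : Subgroup G) := by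
    rw [orderOf_elemPiPart, hcardP, piPart_singleton]
    exact pow_dvd_pow p (Finsupp.le_def.mp
      ((Nat.factorization_le_iff_dvd (orderOf_pos y).ne' Nat.card_pos.ne').mpr
        (orderOf_dvd_natCard y)) p)
  have hone : μ (elemPiPart ({p} : Set ℕ) y) ^ Nat.card ↥(P : Subgroup G) = 1 := by
    rw [← mu_pow π μ hlin _ (hpiPartPi y), orderOf_dvd_iff_pow_eq_one.mp hordgp, h1]
  have hdm := Nat.div_add_mod ((P : Subgroup G).index * c) (Nat.card ↥(P : Subgroup G))
  rw [hc] at hdm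
  calc μ (elemPiPart ({p} : Set ℕ) y) ^ ((P : Subgroup G).index * c)
      = μ (elemPiPart ({p} : Set ℕ) y) ^ (Nat.card ↥(P : Subgroup G) *
          ((P : Subgroup G).index * c / Nat.card ↥(P : Subgroup G)) + 1) := by rw [hdm]
    _ = (μ (elemPiPart ({p} : Set ℕ) y) ^ Nat.card ↥(P : Subgroup G)) ^
          ((P : Subgroup G).index * c / Nat.card ↥(P : Subgroup G)) *
          μ (elemPiPart ({p} : Set ℕ) y) := by rw [pow_add, pow_one, pow_mul]
    _ = μ (elemPiPart ({p} : Set ℕ) y) := by rw [hone, one_pow, one_mul]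

end Mu

open Classical in
lemma sum_expo_modEq (π : Set ℕ) {n N : ℕ} (hn : n ≠ 0) (hnN : n ∣ N) (hN : N ≠ 0) :
    (∑ q ∈ N.primeFactors.filter (fun q => q ∉ π),
        Nat.piPart ({q}ᶜ : Set ℕ) n ^ Nat.totient (Nat.piPart ({q} : Set ℕ) n))
      ≡ 1 [MOD Nat.piPart πᶜ n] := by
  rw [Nat.modEq_iff_dvd, ← dvd_sub_comm]
  have hfact : (Nat.piPart πᶜ n : ℤ)
      = ∏ q ∈ n.primeFactors.filter (fun q => q ∉ π),
          (Nat.piPart ({q} : Set ℕ) n : ℤ) := by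
    rw [piPart_compl_eq_prod π n]
    push_cast
    rfl
  rw [hfact]
  refine Finset.prod_dvd_of_coprime ?_ ?_
  · intro a ha b hb hab
    refine Nat.isCoprime_iff_coprime.mpr ?_
    refine coprime_of_mem (σ := ({a} : Set ℕ))
      (fun r hr hd => (prime_dvd_piPart hr hd).1)
      (fun r hr hd hmem => hab ?_)
    have h1 := Set.eq_of_mem_singleton (prime_dvd_piPart (σ := ({b} : Set ℕ)) hr hd).1
    have h2 := Set.eq_of_mem_singleton hmem
    rw [← h2, h1]
  · intro q hq
    rw [Finset.mem_filter] at hq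
    obtain ⟨hqn, hqπ⟩ := hq
    have hqprime := Nat.prime_of_mem_primeFactors hqn
    have hqS : q ∈ N.primeFactors.filter (fun q => q ∉ π) := by
      rw [Finset.mem_filter, Nat.mem_primeFactors]
      exact ⟨⟨hqprime, (Nat.dvd_of_mem_primeFactors hqn).trans hnN, hN⟩, hqπ⟩
    have hQ1 : (Nat.piPart ({q} : Set ℕ) n : ℤ) ∣
        ((Nat.piPart ({q}ᶜ : Set ℕ) n ^ Nat.totient (Nat.piPart ({q} : Set ℕ) n) : ℕ) : ℤ) - 1 := by
      have h' := Int.natCast_dvd_natCast.mpr (piPart_dvd_expo_sub_one ({q} : Set ℕ) n)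
      rwa [Int.ofNat_sub (expo_pos ({q} : Set ℕ) n), Nat.cast_one] at h'
    have hQr : ∀ r ∈ (N.primeFactors.filter (fun q => q ∉ π)).erase q,
        (Nat.piPart ({q} : Set ℕ) n : ℤ) ∣
          ((Nat.piPart ({r}ᶜ : Set ℕ) n ^ Nat.totient (Nat.piPart ({r} : Set ℕ) n) : ℕ) : ℤ) := by
      intro r hr
      refine Int.natCast_dvd_natCast.mpr ?_
      have hne : q ≠ r := (Finset.ne_of_mem_erase hr).symm
      refine (piPart_dvd_of_subset ?_ n).trans (compl_dvd_expo ({r} : Set ℕ) n)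
      intro x hx
      exact fun hxr => hne ((Set.mem_singleton_iff.mp hx).symm.trans (Set.mem_singleton_iff.mp hxr))
    rw [← Finset.add_sum_erase _ _ hqS, Nat.cast_add, Nat.cast_sum, Nat.cast_one,
      add_sub_right_comm]
    exact dvd_add hQ1 (Finset.dvd_sum hQr)

theorem main_assembly {G : Type} [Group G] [Finite G] (π : Set ℕ) (μ : G → ℂ)
    (hconj : ∀ x h : G, IsPiNumber πᶜ (orderOf x) → μ (h * x * h⁻¹) = μ x)
    (hlin : ∀ B : Subgroup G, IsPiNumber πᶜ (Nat.card ↥B) →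
      μ (1 : G) = 1 ∧ ∀ b c : ↥B, μ ((b : G) * (c : G)) = μ (b : G) * μ (c : G)) :
    ∃ l : G →* ℂˣ, ∀ y : G, (l y : ℂ) = μ (elemPiPart πᶜ y) := by
  classical
  set S : Finset ℕ := (Nat.card G).primeFactors.filter (fun q => q ∉ π) with hS
  have hmem : ∀ q ∈ S, q.Prime ∧ q ∉ π ∧ q ∣ Nat.card G := by
    intro q hq
    rw [hS, Finset.mem_filter, Nat.mem_primeFactors] at hq
    exact ⟨hq.1.1, hq.2, hq.1.2.1⟩
  have hex : ∀ q : ℕ, ∃ lp : G →* ℂˣ, q ∈ S →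
      ∀ y : G, (lp y : ℂ) = μ (elemPiPart ({q} : Set ℕ) y) := by
    intro q
    by_cases hq : q ∈ S
    · obtain ⟨lp, hlp⟩ := exists_linear_part π μ hconj hlin (hmem q hq).1 (hmem q hq).2.1
        (hmem q hq).2.2
      exact ⟨lp, fun _ => hlp⟩
    · exact ⟨1, fun h => absurd h hq⟩
  choose L hL using hex
  refine ⟨∏ q ∈ S, L q, fun y => ?_⟩
  rw [MonoidHom.finset_prod_apply, ← Units.coeHom_apply, map_prod]
  simp only [Units.coeHom_apply]
  rw [Finset.prod_congr rfl (fun q hq => hL q hq y)]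
  -- arithmetic part
  have hn0 : orderOf y ≠ 0 := (orderOf_pos y).ne'
  have h1 : μ (1 : G) = 1 := mu_one π μ hlin
  have hordx₀ : orderOf (elemPiPart πᶜ y) = Nat.piPart πᶜ (orderOf y) :=
    orderOf_elemPiPart πᶜ y
  have hBpi : IsPiNumber πᶜ (Nat.card ↥(Subgroup.zpowers (elemPiPart πᶜ y))) := by
    rw [Nat.card_zpowers, hordx₀]
    exact isPiNumber_piPart πᶜ (orderOf y)
  set φ := muHom μ (Subgroup.zpowers (elemPiPart πᶜ y)) h1 (hlin _ hBpi).2 with hφ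
  have hμx : ∀ k : ℕ, μ (elemPiPart πᶜ y ^ k)
      = φ ⟨elemPiPart πᶜ y, Subgroup.mem_zpowers _⟩ ^ k := by
    intro k
    rw [← map_pow]
    simp [hφ, muHom]
  -- each q-part is a power of the π'-part
  have hmempart : ∀ q ∈ S, elemPiPart ({q} : Set ℕ) y
      = elemPiPart πᶜ y ^ (Nat.piPart ({q}ᶜ : Set ℕ) (orderOf y)
          ^ Nat.totient (Nat.piPart ({q} : Set ℕ) (orderOf y))) := by
    intro q hq
    rw [elemPiPart_def πᶜ y, ← pow_mul, elemPiPart_def ({q} : Set ℕ) y,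
      pow_eq_pow_iff_modEq]
    set Eq' := Nat.piPart ({q}ᶜ : Set ℕ) (orderOf y)
      ^ Nat.totient (Nat.piPart ({q} : Set ℕ) (orderOf y)) with hEq'
    set E₀ := Nat.piPart (πᶜᶜ : Set ℕ) (orderOf y)
      ^ Nat.totient (Nat.piPart πᶜ (orderOf y)) with hE₀
    rw [Nat.modEq_iff_dvd' (Nat.le_mul_of_pos_left _ (expo_pos πᶜ (orderOf y)))]
    have hsub : E₀ * Eq' - Eq' = (E₀ - 1) * Eq' := by rw [Nat.sub_mul, one_mul]
    rw [hsub, ← piPart_mul_compl πᶜ hn0]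
    refine mul_dvd_mul (piPart_dvd_expo_sub_one πᶜ (orderOf y)) ?_
    refine (piPart_dvd_of_subset ?_ (orderOf y)).trans (compl_dvd_expo ({q} : Set ℕ) (orderOf y))
    rw [compl_compl]
    intro x hx
    exact fun hxq => (hmem q hq).2.1 (by rwa [Set.mem_singleton_iff.mp hxq] at hx)
  rw [Finset.prod_congr rfl (fun q hq => by rw [hmempart q hq, hμx])]
  rw [Finset.prod_pow_eq_pow_sum, ← hμx]
  have hcong := sum_expo_modEq π (n := orderOf y) (N := Nat.card G) hn0
    (orderOf_dvd_natCard y) Nat.card_pos.ne'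
  have hfix : elemPiPart πᶜ y ^ (∑ q ∈ S, Nat.piPart ({q}ᶜ : Set ℕ) (orderOf y)
      ^ Nat.totient (Nat.piPart ({q} : Set ℕ) (orderOf y))) = elemPiPart πᶜ y ^ 1 := by
    rw [pow_eq_pow_iff_modEq, hordx₀]
    exact hcong
  rw [hfix, pow_one]

end PiProof

theorem function_of_pi_prime_parts_is_linear_character
    {G : Type} [Group G] [Finite G] (π : Set ℕ) (μ : G → ℂ)
    (hconj : ∀ x h : G, IsPiNumber πᶜ (orderOf x) → μ (h * x * h⁻¹) = μ x)
    (hroot : ∀ x : G, IsPiNumber πᶜ (orderOf x) → ∃ m : ℕ, 0 < m ∧ μ x ^ m = 1)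
    (hlin : ∀ B : Subgroup G, IsPiNumber πᶜ (Nat.card ↥B) →
      μ (1 : G) = 1 ∧ ∀ b c : ↥B, μ ((b : G) * (c : G)) = μ (b : G) * μ (c : G)) :
    ∃ l : G →* ℂˣ, ∀ y : G, (l y : ℂ) = μ (elemPiPart πᶜ y) :=
  PiProof.main_assembly π μ hconj hlin
end
end

section
/- Let H be a finite group and N ⊴ H. If η ∈ Irr(H) extends θ ∈ Irr(N), then for every x ∈ H, Σ_{y ∈ Nx} |η(y)|² = |N|. -/
open scoped BigOperators
noncomputable section

section CosetSumAux

open Matrix LinearMap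
open scoped ComplexOrder

open scoped MatrixOrder in
lemma conj_trace_eq {ι : Type} [Fintype ι] [DecidableEq ι]
    (M M' A : Matrix ι ι ℂ) (hMM' : M * M' = 1) (hM'M : M' * M = 1)
    (hA : A.PosDef) (hinv : Mᴴ * A * M = A) :
    star (M.trace) = M'.trace := by
  set B := CFC.sqrt A with hBdef
  have hB2 : B * B = A := CFC.sqrt_mul_sqrt_self A hA.posSemidef.nonneg
  have hBH : Bᴴ = B := (CFC.sqrt_nonneg A).posSemidef.isHermitian
  have hdet : B.det ≠ 0 := by
    intro h
    have : A.det = 0 := by rw [← hB2, det_mul, h, mul_zero]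
    exact hA.det_pos.ne' this
  have hBi : B * B⁻¹ = 1 := mul_nonsing_inv _ hdet.isUnit
  have hBi' : B⁻¹ * B = 1 := nonsing_inv_mul _ hdet.isUnit
  set U := B * M * B⁻¹ with hU
  have hBinvH : (B⁻¹)ᴴ = B⁻¹ := by rw [conjTranspose_nonsing_inv, hBH]
  have hUH : Uᴴ = B⁻¹ * Mᴴ * B := by
    rw [hU, conjTranspose_mul, conjTranspose_mul, hBinvH, hBH, Matrix.mul_assoc]
  have hUHU : Uᴴ * U = 1 := by
    rw [hUH, hU]
    calc B⁻¹ * Mᴴ * B * (B * M * B⁻¹)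
        = B⁻¹ * (Mᴴ * (B * B) * M) * B⁻¹ := by noncomm_ring
      _ = B⁻¹ * A * B⁻¹ := by rw [hB2, hinv]
      _ = 1 := by rw [← hB2]; calc B⁻¹ * (B * B) * B⁻¹
            = (B⁻¹ * B) * (B * B⁻¹) := by noncomm_ring
          _ = 1 := by rw [hBi, hBi', one_mul]
  have hW : Uᴴ = B * M' * B⁻¹ := by
    have hWU : (B * M' * B⁻¹) * U = 1 := by
      rw [hU]
      calc B * M' * B⁻¹ * (B * M * B⁻¹) = B * (M' * (B⁻¹ * B) * M) * B⁻¹ := by noncomm_ring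
        _ = 1 := by rw [hBi', mul_one, hM'M, mul_one, hBi]
    have hUW : U * (B * M' * B⁻¹) = 1 := by
      rw [hU]
      calc B * M * B⁻¹ * (B * M' * B⁻¹) = B * (M * (B⁻¹ * B) * M') * B⁻¹ := by noncomm_ring
        _ = 1 := by rw [hBi', mul_one, hMM', mul_one, hBi]
    calc Uᴴ = Uᴴ * (U * (B * M' * B⁻¹)) := by rw [hUW, mul_one]
      _ = (Uᴴ * U) * (B * M' * B⁻¹) := (Matrix.mul_assoc _ _ _).symm
      _ = B * M' * B⁻¹ := by rw [hUHU, one_mul]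
  have hMH : Mᴴ = B * Uᴴ * B⁻¹ := by
    rw [hUH]
    calc Mᴴ = (B * B⁻¹) * Mᴴ * (B * B⁻¹) := by rw [hBi, one_mul, mul_one]
      _ = B * (B⁻¹ * Mᴴ * B) * B⁻¹ := by noncomm_ring
  calc star M.trace = Mᴴ.trace := (trace_conjTranspose M).symm
    _ = (B * (Uᴴ * B⁻¹)).trace := by rw [hMH, Matrix.mul_assoc]
    _ = ((Uᴴ * B⁻¹) * B).trace := trace_mul_comm _ _
    _ = Uᴴ.trace := by rw [Matrix.mul_assoc, hBi', mul_one]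
    _ = ((B * M') * B⁻¹).trace := by rw [hW]
    _ = (B⁻¹ * (B * M')).trace := trace_mul_comm _ _
    _ = M'.trace := by rw [← Matrix.mul_assoc, hBi', one_mul]


lemma conj_char {G : Type} [Group G] [Finite G] (V : FDRep ℂ G) (g : G) :
    starRingEnd ℂ (V.character g) = V.character g⁻¹ := by
  have : Fintype G := Fintype.ofFinite G
  classical
  let b := Module.finBasis ℂ V
  let mat : G → Matrix (Fin (Module.finrank ℂ V)) (Fin (Module.finrank ℂ V)) ℂ :=
    fun h => LinearMap.toMatrix b b (V.ρ h)
  have hmul : ∀ h h' : G, mat (h * h') = mat h * mat h' := by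
    intro h h'
    simp only [mat, _root_.map_mul]
    exact LinearMap.toMatrix_mul b _ _
  have hone : mat 1 = 1 := by simp only [mat, _root_.map_one, LinearMap.toMatrix_one]
  have htr : ∀ h : G, V.character h = (mat h).trace := fun h =>
    LinearMap.trace_eq_matrix_trace ℂ b (V.ρ h)
  set A : Matrix (Fin (Module.finrank ℂ V)) (Fin (Module.finrank ℂ V)) ℂ :=
    ∑ h : G, (mat h)ᴴ * mat h with hAdef
  have hA : A.PosDef := by
    have h1 : A = (mat 1)ᴴ * mat 1 + ∑ h ∈ Finset.univ.erase 1, (mat h)ᴴ * mat h :=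
      (Finset.add_sum_erase _ _ (Finset.mem_univ 1)).symm
    rw [h1, hone, conjTranspose_one, one_mul]
    refine Matrix.PosDef.add_posSemidef Matrix.PosDef.one ?_
    refine Finset.sum_induction _ _ (fun a b ha hb => ha.add hb) Matrix.PosSemidef.zero
      (fun h _ => Matrix.posSemidef_conjTranspose_mul_self _)
  have hinv : (mat g)ᴴ * A * mat g = A := by
    rw [hAdef, Finset.mul_sum, Finset.sum_mul]
    rw [← Fintype.sum_equiv (Equiv.mulRight g) _ (fun h => (mat h)ᴴ * mat h) (fun h => rfl)]
    refine Finset.sum_congr rfl fun h _ => ?_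
    simp only [Equiv.coe_mulRight, hmul, conjTranspose_mul]
    noncomm_ring
  have h1 : mat g * mat g⁻¹ = 1 := by rw [← hmul, mul_inv_cancel, hone]
  have h2 : mat g⁻¹ * mat g = 1 := by rw [← hmul, inv_mul_cancel, hone]
  rw [htr, htr]
  exact conj_trace_eq (mat g) (mat g⁻¹) A h1 h2 hA hinv

end CosetSumAux

theorem coset_sum_of_norm_squares_of_extension
    {H : Type} [Group H] [Finite H] (N : Subgroup H) [N.Normal]
    (θ : ↥N → ℂ) (hθ : IsIrrChar ↥N θ)
    (η : H → ℂ) (hη : IsIrrChar H η) (hext : ∀ n : ↥N, η (n : H) = θ n)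
    (x : H) :
    ∑ᶠ y ∈ {y : H | y * x⁻¹ ∈ N}, η y * starRingEnd ℂ (η y) =
      (Nat.card ↥N : ℂ) := by
  classical
  have _instH : Fintype H := Fintype.ofFinite H
  have _instN : Fintype ↥N := Fintype.ofFinite ↥N
  obtain ⟨⟨V, hV⟩, hηn⟩ := hη
  set W := FDRep.of (Representation.linHom V.ρ V.ρ) with hWdef
  have hα : ∀ g : H, W.character g = η g * starRingEnd ℂ (η g) := by
    intro g
    rw [hWdef, FDRep.char_linHom, ← conj_char V g, ← hV, mul_comm]
  set π := W.ρ with hπdef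
  have htrπ : ∀ g : H, LinearMap.trace ℂ _ (π g) = η g * starRingEnd ℂ (η g) :=
    fun g => hα g
  set c : ℂ := (Fintype.card ↥N : ℂ) with hcdef
  have hc0 : c ≠ 0 := Nat.cast_ne_zero.2 Fintype.card_ne_zero
  set P := c⁻¹ • ∑ n : ↥N, π (n : H) with hPdef
  -- left/right invariance of P
  have hsumL : ∀ m : ↥N, π (m : H) * (∑ n : ↥N, π (n : H)) = ∑ n : ↥N, π (n : H) := by
    intro m
    rw [Finset.mul_sum]
    calc ∑ n : ↥N, π (m : H) * π (n : H) = ∑ n : ↥N, π ((m * n : ↥N) : H) := by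
          refine Finset.sum_congr rfl fun n _ => ?_
          rw [Subgroup.coe_mul, _root_.map_mul]
      _ = ∑ n : ↥N, π (n : H) :=
          (Fintype.sum_equiv (Equiv.mulLeft m⁻¹) (fun n : ↥N => π (n : H))
            (fun n : ↥N => π ((m * n : ↥N) : H)) fun n => by simp).symm
  have hPn : ∀ m : ↥N, π (m : H) * P = P := by
    intro m
    rw [hPdef, mul_smul_comm, hsumL]
  have hPP : P * P = P := by
    conv_lhs => rw [hPdef]
    rw [smul_mul_assoc, Finset.sum_mul]
    simp only [← hPdef, hPn]
    rw [Finset.sum_const, Finset.card_univ, ← Nat.cast_smul_eq_nsmul ℂ, smul_smul,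
      ← hcdef, inv_mul_cancel₀ hc0, one_smul]
  -- commutation with all π g
  have hcomm : ∀ g : H, π g * P = P * π g := by
    intro g
    rw [hPdef, mul_smul_comm, smul_mul_assoc]
    congr 1
    rw [Finset.mul_sum, Finset.sum_mul]
    refine Fintype.sum_equiv ((MulAut.conjNormal g : MulAut ↥N)).toEquiv _ _ fun n => ?_
    show π g * π (n : H) = π ((MulAut.conjNormal g n : ↥N) : H) * π g
    rw [← _root_.map_mul, ← _root_.map_mul]
    congr 1
    rw [MulAut.conjNormal_apply]
    group
  -- trace of P is 1
  have hθsum : ∑ n : ↥N, θ n * starRingEnd ℂ (θ n) = c := by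
    have h2 := hθ.2
    rw [charInner, finsum_eq_sum_of_fintype, Nat.card_eq_fintype_card, ← hcdef,
      inv_mul_eq_one₀ hc0] at h2
    exact h2.symm
  -- P is a projection onto its range
  have hproj : LinearMap.IsProj (LinearMap.range P) P := by
    refine ⟨fun v => LinearMap.mem_range_self P v, ?_⟩
    rintro v ⟨w, rfl⟩
    have h := LinearMap.ext_iff.1 hPP w
    rwa [Module.End.mul_apply] at h
  have htrP : LinearMap.trace ℂ _ P = 1 := by
    rw [hPdef, LinearMap.map_smul, map_sum]
    have h6 : ∀ n : ↥N, LinearMap.trace ℂ _ (π (n : H)) = θ n * starRingEnd ℂ (θ n) := by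
      intro n; rw [htrπ, hext]
    simp only [h6]
    rw [hθsum, smul_eq_mul, inv_mul_cancel₀ hc0]
  have hfr : Module.finrank ℂ (LinearMap.range P) = 1 := by
    have h := hproj.trace
    rw [htrP] at h
    exact_mod_cast h.symm
  obtain ⟨u, hu0, hspan⟩ := finrank_eq_one_iff'.mp hfr
  have hu0' : u.1 ≠ 0 := fun h => hu0 (Subtype.ext h)
  have hPu : P u.1 = u.1 := by
    obtain ⟨w, hw⟩ := u.2
    rw [← hw, ← Module.End.mul_apply, hPP]
  obtain ⟨lam, hlam⟩ : ∃ lam : ℂ, lam • u.1 = π x u.1 := by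
    have hmem : π x u.1 ∈ LinearMap.range P := by
      have h2 : P (π x u.1) = π x u.1 := by
        conv_rhs => rw [← hPu]
        have h3 := LinearMap.ext_iff.1 (hcomm x) u.1
        rw [Module.End.mul_apply, Module.End.mul_apply] at h3
        exact h3.symm
      exact ⟨π x u.1, h2⟩
    obtain ⟨a, ha⟩ := hspan ⟨π x u.1, hmem⟩
    refine ⟨a, ?_⟩
    have := congrArg Subtype.val ha
    simpa using this
  have hPxP : P * π x * P = lam • P := by
    refine LinearMap.ext fun w => ?_
    obtain ⟨a, ha⟩ := hspan ⟨P w, LinearMap.mem_range_self _ _⟩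
    have ha' : a • u.1 = P w := by
      have := congrArg Subtype.val ha
      simpa using this
    simp only [Module.End.mul_apply, LinearMap.smul_apply]
    rw [← ha', _root_.map_smul, ← hlam, _root_.map_smul, _root_.map_smul, hPu, smul_comm]
  have htrlam : LinearMap.trace ℂ _ (P * π x) = lam := by
    have h4 : P * π x = P * (P * π x) := by rw [← mul_assoc, hPP]
    rw [h4, LinearMap.trace_mul_comm, hPxP, _root_.map_smul, htrP, smul_eq_mul,
      mul_one]
  have hsum2 : ∑ n : ↥N, (η ((n : H) * x) * starRingEnd ℂ (η ((n : H) * x))) = c * lam := by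
    have e1 : ∀ n : ↥N, η ((n : H) * x) * starRingEnd ℂ (η ((n : H) * x))
        = LinearMap.trace ℂ _ (π (n : H) * π x) := by
      intro n; rw [← _root_.map_mul, htrπ]
    simp only [e1]
    rw [← map_sum, ← Finset.sum_mul]
    have e2 : (∑ n : ↥N, π (n : H)) = c • P := by
      rw [hPdef, smul_smul, mul_inv_cancel₀ hc0, one_smul]
    rw [e2, smul_mul_assoc, _root_.map_smul, htrlam, smul_eq_mul]
  have hpow : ∀ k : ℕ, (π x ^ k) u.1 = lam ^ k • u.1 := by
    intro k; induction k with
    | zero => simp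
    | succ k ih =>
      rw [pow_succ', Module.End.mul_apply, ih, _root_.map_smul, ← hlam, smul_smul, ← pow_succ]
  have hm1 : lam ^ Fintype.card H = 1 := by
    have hx : x ^ Fintype.card H = 1 := pow_card_eq_one
    have h5 := hpow (Fintype.card H)
    rw [← map_pow, hx, _root_.map_one, Module.End.one_apply] at h5
    have h0 : (lam ^ Fintype.card H - 1) • u.1 = 0 := by
      rw [sub_smul, one_smul, ← h5, sub_self]
    rcases smul_eq_zero.mp h0 with h | h
    · exact sub_eq_zero.mp h
    · exact absurd h hu0'
  -- convert the finsum over the coset to the indexed sum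
  have himg : {y : H | y * x⁻¹ ∈ N} = (fun n : ↥N => (n : H) * x) '' Set.univ := by
    ext y
    simp only [Set.mem_setOf_eq, Set.image_univ, Set.mem_range]
    constructor
    · intro hy
      exact ⟨⟨y * x⁻¹, hy⟩, by group⟩
    · rintro ⟨n, rfl⟩
      simpa using n.2
  have hinj : Set.InjOn (fun n : ↥N => (n : H) * x) Set.univ := by
    intro a _ b _ hab
    have : (a : H) = b := mul_right_cancel hab
    exact Subtype.ext this
  have hset : ∑ᶠ y ∈ {y : H | y * x⁻¹ ∈ N}, η y * starRingEnd ℂ (η y)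
      = ∑ n : ↥N, η ((n : H) * x) * starRingEnd ℂ (η ((n : H) * x)) := by
    rw [himg, finsum_mem_image hinj, finsum_mem_univ, finsum_eq_sum_of_fintype]
  -- realness and nonnegativity
  set r : ℝ := ∑ n : ↥N, Complex.normSq (η ((n : H) * x)) with hrdef
  have hr : ∑ n : ↥N, η ((n : H) * x) * starRingEnd ℂ (η ((n : H) * x)) = (r : ℂ) := by
    rw [hrdef]
    push_cast
    exact Finset.sum_congr rfl fun n _ => (Complex.mul_conj _)
  have hrnn : 0 ≤ r := Finset.sum_nonneg fun n _ => Complex.normSq_nonneg _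
  have hclam : c * lam = (r : ℂ) := by rw [← hsum2, hr]
  set t : ℝ := r / (Fintype.card ↥N : ℝ) with htdef
  have hlamt : lam = (t : ℂ) := by
    have h8 : lam = (r : ℂ) / c := by
      rw [eq_div_iff hc0, mul_comm, hclam]
    rw [h8, htdef, hcdef]
    push_cast
    ring
  have htnn : 0 ≤ t := div_nonneg hrnn (Nat.cast_nonneg _)
  have htm : t ^ Fintype.card H = 1 := by
    have h7 := hm1
    rw [hlamt, ← Complex.ofReal_pow] at h7
    exact_mod_cast h7
  have ht1 : t = 1 := by
    rcases lt_trichotomy t 1 with h | h | h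
    · have := pow_lt_one₀ htnn h (Fintype.card_ne_zero (α := H))
      rw [htm] at this
      exact absurd this (lt_irrefl 1)
    · exact h
    · have := one_lt_pow₀ h (Fintype.card_ne_zero (α := H))
      rw [htm] at this
      exact absurd this (lt_irrefl 1)
  have hlam1 : lam = 1 := by rw [hlamt, ht1, Complex.ofReal_one]
  rw [hset, hsum2, hlam1, mul_one, hcdef, Nat.card_eq_fintype_card]
end
end
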